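/- arXiv:2507.12831 — 4 statements merged into one kernel-verified Lean document; each statement's English description precedes it below -/
import Mathlib

section
/- Let G = (V,E) be a hypergraph, let w ∈ V, let f be a nonempty set of nodes disjoint from V, and let G' be the hypergraph obtained from G by expanding w to f. If CER(G) is an extension of MP(G), then CER(G') is an extension of MP(G'). -/
open Finset

namespace BPO

variable {N : Type*} [DecidableEq N]

/-- Coordinate index set of `ℝ^{V ∪ E}`: one coordinate for each edge, and one
coordinate (labelled by the corresponding singleton) for each node. -/
def coords (V : Finset N) (E : Finset (Finset N)) : Finset (Finset N) :=
  E ∪ V.image fun v => {v}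

/-- A point of `ℝ^{V ∪ E}`. -/
abbrev Pt (V : Finset N) (E : Finset (Finset N)) : Type _ :=
  {p : Finset N // p ∈ coords V E} → ℝ

/-- Evaluate a coordinate of a point, with the convention `z_∅ = 1`.
For a node `v`, the coordinate `z_v` is `ev z {v}`. -/
noncomputable def ev {V : Finset N} {E : Finset (Finset N)} (z : Pt V E)
    (p : Finset N) : ℝ :=
  if h : p ∈ coords V E then z ⟨p, h⟩ else if p = ∅ then 1 else 0

/-- The multilinear set `S(G)`: binary points with `z_e = ∏_{v ∈ e} z_v`. -/
def mlSet (V : Finset N) (E : Finset (Finset N)) : Set (Pt V E) :=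
  { z | (∀ p, z p = 0 ∨ z p = 1) ∧ ∀ e ∈ E, ev z e = ∏ v ∈ e, ev z {v} }

/-- The multilinear polytope `MP(G)`. -/
noncomputable def MP (V : Finset N) (E : Finset (Finset N)) : Set (Pt V E) :=
  convexHull ℝ (mlSet V E)

/-- The completion `cl(E) = { f ⊆ e : |f| ≥ 2, e ∈ E }`. -/
def clE (E : Finset (Finset N)) : Finset (Finset N) :=
  (E.biUnion Finset.powerset).filter fun g => 2 ≤ g.card

/-- The set of maximal edges of `E`. -/
def maxEdges (E : Finset (Finset N)) : Finset (Finset N) :=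
  E.filter fun e => ∀ e' ∈ E, e ⊆ e' → e = e'

/-- The linear function `ψ(U, e)`. -/
noncomputable def psi {V : Finset N} {E : Finset (Finset N)} (z : Pt V E)
    (U e : Finset N) : ℝ :=
  ∑ W ∈ U.powerset, (if Even W.card then (1 : ℝ) else -1) * ev z ((e \ U) ∪ W)

/-- The complete edge relaxation constraints (`ψ(U,e) ≥ 0` for `U ⊆ e`, `e` a
maximal edge of `E`), imposed on the coordinate space `ℝ^{V ∪ F}`. -/
noncomputable def cerSet (V : Finset N) (E F : Finset (Finset N)) : Set (Pt V F) :=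
  { z | ∀ e ∈ maxEdges E, ∀ U ⊆ e, 0 ≤ psi z U e }

/-- The complete edge relaxation `CER(G) ⊆ ℝ^{V ∪ cl(E)}`. -/
noncomputable def CER (V : Finset N) (E : Finset (Finset N)) : Set (Pt V (clE E)) :=
  cerSet V E (clE E)

/-- Projection onto the coordinates of `ℝ^{V₂ ∪ E₂}`. -/
noncomputable def res (V₂ : Finset N) (E₂ : Finset (Finset N)) {V₁ : Finset N}
    {E₁ : Finset (Finset N)} (z : Pt V₁ E₁) : Pt V₂ E₂ :=
  fun p => ev z p.1

/-- `CER(G)` is an extension of `MP(G)`: `MP(G)` is the image of `CER(G)` under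
the projection of `ℝ^{V ∪ cl(E)}` onto `ℝ^{V ∪ E}`. -/
def IsExtension (V : Finset N) (E : Finset (Finset N)) : Prop :=
  MP V E = (fun z : Pt V (clE E) => res V E z) '' CER V E

/-- The running intersection property for the family `E`. -/
def RunningIntersection (E : Finset (Finset N)) : Prop :=
  ∃ L : List (Finset N), L.Nodup ∧ L.toFinset = E ∧
    ∀ k, 0 < k → k < L.length →
      ∃ j < k, L.getD k ∅ ∩ (L.take k).foldr (· ∪ ·) ∅ ⊆ L.getD j ∅

/-- A hypergraph is α-acyclic if its edge set has the running intersection property. -/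
def AlphaAcyclic (E : Finset (Finset N)) : Prop := RunningIntersection E

/-- `s_i = e_i ∩ e_{i+1}` for a cyclic sequence `e_1, …, e_ℓ, e_{ℓ+1} = e_1`. -/
def cycS (c : ℕ → Finset N) (ℓ i : ℕ) : Finset N :=
  c i ∩ c (if i = ℓ then 1 else i + 1)

/-- A simple cycle `e_1, …, e_ℓ, e_{ℓ+1} = e_1` of length `ℓ`. -/
def IsSimpleCycle (E : Finset (Finset N)) (ℓ : ℕ) (c : ℕ → Finset N) : Prop :=
  3 ≤ ℓ ∧ (∀ i, 1 ≤ i → i ≤ ℓ → c i ∈ E) ∧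
    ∀ i j k, 1 ≤ i → i < j → j < k → k ≤ ℓ → ∀ e ∈ E,
      ((cycS c ℓ i ∪ cycS c ℓ j ∪ cycS c ℓ k) \ e).Nonempty

/-- An α-cycle `e_1, …, e_ℓ, e_{ℓ+1} = e_1` of length `ℓ`. -/
def IsAlphaCycle (E : Finset (Finset N)) (ℓ : ℕ) (c : ℕ → Finset N) : Prop :=
  3 ≤ ℓ ∧ (∀ i, 1 ≤ i → i ≤ ℓ → c i ∈ E) ∧
    (∀ i j, 1 ≤ i → i ≤ ℓ → 1 ≤ j → j ≤ ℓ → i ≠ j → (c i \ c j).Nonempty) ∧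
    ∀ i, 1 ≤ i → i ≤ ℓ → ∀ e ∈ E,
      ((cycS c ℓ (if i = 1 then ℓ else i - 1) ∪ cycS c ℓ i ∪
        cycS c ℓ (if i = ℓ then 1 else i + 1)) \ e).Nonempty

/-- A chordless α-cycle: no subsequence `e_i, …, e_j, ẽ, e_i` is an α-cycle. -/
def Chordless (E : Finset (Finset N)) (ℓ : ℕ) (c : ℕ → Finset N) : Prop :=
  ∀ i j, 1 ≤ i → i < j → j ≤ ℓ → j - i ≤ ℓ - 3 →
    ∀ g ∈ E, (∀ k, i ≤ k → k ≤ j → g ≠ c k) →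
      ¬ IsAlphaCycle E (j - i + 2) fun k => if k ≤ j - i + 1 then c (i + k - 1) else g

/-- The edge set `E_{V'}` of the subhypergraph induced by `W`. -/
def indE (E : Finset (Finset N)) (W : Finset N) : Finset (Finset N) :=
  (E.image fun e => e ∩ W).filter fun g => 2 ≤ g.card

/-- The edge set `E_{w→u}` obtained by contracting `w` to `u`. -/
def contrE (E : Finset (Finset N)) (u w : N) : Finset (Finset N) :=
  E.filter (fun e => w ∉ e) ∪
    (E.filter fun e => w ∈ e ∧ e ≠ {u, w}).image fun e => e.erase w ∪ {u}

/-- The edge set `E'` obtained by expanding `w` to `f`. -/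
def expE (E : Finset (Finset N)) (w : N) (f : Finset N) : Finset (Finset N) :=
  insert f
    (E.filter (fun e => w ∉ e) ∪ (E.filter fun e => w ∈ e).image fun e => e.erase w ∪ f)

/-- The coordinate renaming `x_w → z_f`, `x_v → z_v`, `x_e → z_e` (`w ∉ e`),
`x_e → z_{(e∖{w}) ⊎ f}` (`w ∈ e`) used in the expansion operation. -/
def expRen (w : N) (f : Finset N) (p : Finset N) : Finset N :=
  if p = {w} then f else if w ∈ p then p.erase w ∪ f else p

/-!
The projection of `CER` always contains `MP`: a binary point lifts to the product point with the
same node values, which satisfies every `ψ`-inequality.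

For the converse, take `z'` in `CER(G')` and pull it back along the renaming `x_w ↦ z_f` to a
point `x` of `ℝ^{V ∪ cl(E)}`. Each `ψ(U, e)(x)` is a nonnegative combination of the values
`ψ(·, e')(z')` at the maximal edge `e'` of `G'` corresponding to `e`, so `x ∈ CER(G)`, and by
hypothesis its projection is a convex combination of binary points `y_i` of `S(G)`. A maximal
edge of `G'` containing `f` provides a probability distribution `D` on the subsets of `f` whose
upward marginals are the values of `z'`. Lift `y_i` to `G'` by putting all ones on `f` when
`y_i(w) = 1`, and a pattern `F ≠ f` drawn from `D` conditioned on `F ≠ f` when `y_i(w) = 0`; the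
resulting mixture of binary points of `S(G')` projects to `z'`.
-/

section Coordinates

variable {V : Finset N} {E : Finset (Finset N)}

lemma singleton_mem_coords {v : N} (hv : v ∈ V) : ({v} : Finset N) ∈ coords V E :=
  mem_union_right _ (mem_image_of_mem _ hv)

lemma mem_coords_of_mem {e : Finset N} (he : e ∈ E) : e ∈ coords V E :=
  mem_union_left _ he

lemma ev_of_mem (z : Pt V E) {p : Finset N} (hp : p ∈ coords V E) : ev z p = z ⟨p, hp⟩ :=
  dif_pos hp

lemma ev_empty (hE : ∀ e ∈ E, e.Nonempty) (z : Pt V E) : ev z ∅ = 1 := by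
  have : (∅ : Finset N) ∉ coords V E := by
    simp only [coords, mem_union, mem_image, not_or, not_exists, not_and]
    exact ⟨fun h => not_nonempty_empty (hE ∅ h), fun v _ => singleton_ne_empty v⟩
  rw [ev, dif_neg this, if_pos rfl]

lemma ev_add_smul (z₁ z₂ : Pt V E) {a b : ℝ} (hab : a + b = 1) (p : Finset N) :
    ev (a • z₁ + b • z₂) p = a * ev z₁ p + b * ev z₂ p := by
  unfold ev
  split_ifs
  · rfl
  · rw [mul_one, mul_one, hab]
  · ring

lemma psi_add_smul (z₁ z₂ : Pt V E) {a b : ℝ} (hab : a + b = 1) (U e : Finset N) :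
    psi (a • z₁ + b • z₂) U e = a * psi z₁ U e + b * psi z₂ U e := by
  simp only [psi, ev_add_smul z₁ z₂ hab, mul_sum, ← sum_add_distrib]
  exact sum_congr rfl fun _ _ => by ring

lemma psi_eq_sum (z : Pt V E) (U e : Finset N) :
    psi z U e = ∑ W ∈ U.powerset, (-1 : ℝ) ^ #W * ev z (e \ U ∪ W) := by
  simp only [psi, neg_one_pow_eq_ite]

lemma mem_clE {g : Finset N} : g ∈ clE E ↔ 2 ≤ #g ∧ ∃ e ∈ E, g ⊆ e := by
  simp [clE, and_comm]

lemma nonempty_of_mem_clE {g : Finset N} (hg : g ∈ clE E) : g.Nonempty :=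
  card_pos.1 (lt_of_lt_of_le two_pos (mem_clE.1 hg).1)

lemma mem_coords_clE_or_eq_empty (hVsub : ∀ e ∈ E, e ⊆ V) {e A : Finset N} (he : e ∈ E)
    (hA : A ⊆ e) : A ∈ coords V (clE E) ∨ A = ∅ := by
  obtain h | ⟨v, rfl⟩ | h : #A = 0 ∨ (∃ v, A = {v}) ∨ 2 ≤ #A := by
    rcases Nat.lt_or_ge #A 2 with h | h
    · interval_cases hA : #A
      · exact Or.inl rfl
      · exact Or.inr (Or.inl (card_eq_one.1 hA))
    · exact Or.inr (Or.inr h)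
  · exact Or.inr (card_eq_zero.1 h)
  · exact Or.inl (singleton_mem_coords (hVsub e he (singleton_subset_iff.1 hA)))
  · exact Or.inl (mem_coords_of_mem (mem_clE.2 ⟨h, e, he, hA⟩))

lemma mem_maxEdges {e : Finset N} : e ∈ maxEdges E ↔ e ∈ E ∧ ∀ e' ∈ E, e ⊆ e' → e = e' :=
  mem_filter

lemma exists_mem_maxEdges_superset {e : Finset N} (he : e ∈ E) : ∃ m ∈ maxEdges E, e ⊆ m := by
  obtain ⟨m, hem, hmE, hm⟩ := E.exists_le_maximal he
  exact ⟨m, mem_maxEdges.2 ⟨hmE, fun e' he' hme' => subset_antisymm hme' (hm he' hme')⟩, hem⟩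

end Coordinates

/-- Möbius inversion on the boolean lattice of subsets of `e`. -/
lemma sum_sum_powerset_sdiff_sign (g : Finset N → ℝ) {A e : Finset N} (hA : A ⊆ e) :
    ∑ S ∈ e.powerset with A ⊆ S, ∑ W ∈ (e \ S).powerset, (-1 : ℝ) ^ #W * g (S ∪ W) = g A := by
  have reindex : ∑ S ∈ e.powerset with A ⊆ S, ∑ W ∈ (e \ S).powerset, (-1 : ℝ) ^ #W * g (S ∪ W)
      = ∑ B ∈ e.powerset with A ⊆ B, ∑ W ∈ (B \ A).powerset, (-1 : ℝ) ^ #W * g B := by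
    rw [sum_sigma', sum_sigma']
    refine sum_nbij' (fun x => ⟨x.1 ∪ x.2, x.2⟩) (fun y => ⟨y.1 \ y.2, y.2⟩) ?_ ?_ ?_ ?_
      fun _ _ => rfl
    all_goals simp only [mem_sigma, mem_filter, mem_powerset, Sigma.forall, Sigma.mk.injEq,
      heq_eq_eq, and_true]
    · intro S W ⟨⟨hSe, hAS⟩, hW⟩
      refine ⟨⟨union_subset hSe (hW.trans sdiff_subset), hAS.trans subset_union_left⟩, ?_⟩
      intro x hx
      have hx' := mem_sdiff.1 (hW hx)
      exact mem_sdiff.2 ⟨mem_union_right _ hx, fun hxA => hx'.2 (hAS hxA)⟩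
    · intro B W ⟨⟨hBe, hAB⟩, hW⟩
      refine ⟨⟨sdiff_subset.trans hBe, fun x hx => mem_sdiff.2 ⟨hAB hx, fun hxW =>
        (mem_sdiff.1 (hW hxW)).2 hx⟩⟩, fun x hx => ?_⟩
      have hx' := mem_sdiff.1 (hW hx)
      simp [hBe hx'.1, hx]
    · intro S W ⟨_, hW⟩
      exact union_sdiff_cancel_right (disjoint_of_subset_right hW disjoint_sdiff)
    · intro B W ⟨_, hW⟩
      exact sdiff_union_of_subset (hW.trans sdiff_subset)
  rw [reindex, sum_eq_single_of_mem A (by simp [hA])]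
  · simp [← sum_mul]
  · intro B hB hBA
    have hsign := congrArg (Int.cast : ℤ → ℝ) (sum_powerset_neg_one_pow_card (x := B \ A))
    push_cast at hsign
    rw [← sum_mul, hsign, if_neg, zero_mul]
    exact fun h => hBA (subset_antisymm (sdiff_eq_empty_iff_subset.1 h) (mem_filter.1 hB).2)

section Relaxation

variable {V : Finset N} {E : Finset (Finset N)}

/-- The values `psi z (e \ S) e`, `S ⊆ e`, are the weights of a signed measure on the subsets
of `e` whose upward marginals are the coordinates of `z`. -/
lemma sum_psi_of_subset (z : Pt V E) {A e : Finset N} (hA : A ⊆ e) :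
    ∑ S ∈ e.powerset with A ⊆ S, psi z (e \ S) e = ev z A := by
  rw [← sum_sum_powerset_sdiff_sign (ev z) hA]
  refine sum_congr rfl fun S hS => ?_
  rw [psi_eq_sum, Finset.sdiff_sdiff_eq_self (mem_powerset.1 (mem_filter.1 hS).1)]

lemma sum_powerset_sign_mul_prod (t : N → ℝ) {B U : Finset N} (hBU : Disjoint B U) :
    ∑ W ∈ U.powerset, (-1 : ℝ) ^ #W * ∏ v ∈ B ∪ W, t v
      = (∏ v ∈ B, t v) * ∏ v ∈ U, (1 - t v) := by
  simp_rw [sub_eq_neg_add, prod_add, prod_const_one, mul_one, mul_sum]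
  refine sum_congr rfl fun W hW => ?_
  rw [prod_union (hBU.mono_right (mem_powerset.1 hW)), prod_neg]
  ring

/-- The sum is a nonnegative combination of the weights `psi z (e \ S) e`, `S ⊆ e`. -/
lemma sum_sign_ev_biUnion_nonneg {z : Pt V E} {e : Finset N} (hz : ∀ U ⊆ e, 0 ≤ psi z U e)
    (ρ : N → Finset N) {B U : Finset N} (hBU : Disjoint B U) (hρ : ∀ v ∈ B ∪ U, ρ v ⊆ e) :
    0 ≤ ∑ W ∈ U.powerset, (-1 : ℝ) ^ #W * ev z ((B ∪ W).biUnion ρ) := by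
  set χ : Finset N → N → ℝ := fun S v => if ρ v ⊆ S then 1 else 0
  have hev : ∀ W ∈ U.powerset, ev z ((B ∪ W).biUnion ρ)
      = ∑ S ∈ e.powerset, psi z (e \ S) e * ∏ v ∈ B ∪ W, χ S v := by
    intro W hW
    have hsub : (B ∪ W).biUnion ρ ⊆ e := biUnion_subset.2 fun v hv =>
      hρ v (union_subset_union_right (mem_powerset.1 hW) hv)
    rw [← sum_psi_of_subset z hsub, sum_filter]
    refine sum_congr rfl fun S _ => ?_
    rw [prod_boole, mul_ite, mul_one, mul_zero]
    exact if_congr biUnion_subset rfl rfl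
  have hsum : ∑ W ∈ U.powerset, (-1 : ℝ) ^ #W * ev z ((B ∪ W).biUnion ρ)
      = ∑ S ∈ e.powerset, psi z (e \ S) e * ((∏ v ∈ B, χ S v) * ∏ v ∈ U, (1 - χ S v)) := by
    rw [sum_congr rfl fun W hW => by rw [hev W hW]]
    simp_rw [mul_sum]
    rw [sum_comm]
    refine sum_congr rfl fun S _ => ?_
    rw [← sum_powerset_sign_mul_prod (χ S) hBU, mul_sum]
    exact sum_congr rfl fun _ _ => by ring
  rw [hsum]
  refine sum_nonneg fun S _ => mul_nonneg (hz _ sdiff_subset) (mul_nonneg ?_ ?_) <;>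
    exact prod_nonneg fun v _ => by unfold χ; split_ifs <;> norm_num

lemma psi_nonneg_of_subset {z : Pt V E} {e f : Finset N} (hz : ∀ U ⊆ e, 0 ≤ psi z U e)
    (hf : f ⊆ e) {U : Finset N} (hU : U ⊆ f) : 0 ≤ psi z U f := by
  have := sum_sign_ev_biUnion_nonneg hz singleton disjoint_sdiff_self_left
    fun v hv => singleton_subset_iff.2 (hf ((sdiff_union_of_subset hU).subset hv))
  simpa only [psi_eq_sum, biUnion_singleton_eq_self] using this

end Relaxation

section ProductPoints

variable {V : Finset N} {E : Finset (Finset N)}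

def prodPt (V : Finset N) (E : Finset (Finset N)) (s : N → ℝ) : Pt V E :=
  fun p => ∏ v ∈ p.1, s v

lemma ev_prodPt (s : N → ℝ) {p : Finset N} (hp : p ∈ coords V E ∨ p = ∅) :
    ev (prodPt V E s) p = ∏ v ∈ p, s v := by
  rcases hp with hp | rfl
  · exact ev_of_mem _ hp
  · unfold ev
    split_ifs <;> simp_all [prodPt]

lemma mem_coords_clE_or_eq_empty_of_mem_coords (hVsub : ∀ e ∈ E, e ⊆ V) {p : Finset N}
    (hp : p ∈ coords V E) : p ∈ coords V (clE E) ∨ p = ∅ := by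
  rcases mem_union.1 hp with hpE | hpV
  · exact mem_coords_clE_or_eq_empty hVsub hpE subset_rfl
  · obtain ⟨v, hv, rfl⟩ := mem_image.1 hpV
    exact Or.inl (singleton_mem_coords hv)

lemma subset_of_mem_coords (hVsub : ∀ e ∈ E, e ⊆ V) {p : Finset N} (hp : p ∈ coords V E) :
    p ⊆ V := by
  rcases mem_union.1 hp with hpE | hpV
  · exact hVsub p hpE
  · obtain ⟨v, hv, rfl⟩ := mem_image.1 hpV
    exact singleton_subset_iff.2 hv

lemma psi_prodPt (hVsub : ∀ e ∈ E, e ⊆ V) (s : N → ℝ) {U e : Finset N} (he : e ∈ E)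
    (hU : U ⊆ e) :
    psi (prodPt V (clE E) s) U e = (∏ v ∈ e \ U, s v) * ∏ v ∈ U, (1 - s v) := by
  rw [psi_eq_sum, ← sum_powerset_sign_mul_prod s disjoint_sdiff_self_left]
  refine sum_congr rfl fun W hW => ?_
  rw [ev_prodPt s (mem_coords_clE_or_eq_empty hVsub he
    (union_subset sdiff_subset ((mem_powerset.1 hW).trans hU)))]

lemma prodPt_mem_CER (hVsub : ∀ e ∈ E, e ⊆ V) {s : N → ℝ} (hs : ∀ v ∈ V, 0 ≤ s v ∧ s v ≤ 1) :
    prodPt V (clE E) s ∈ CER V E := by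
  intro e he U hU
  have heE := (mem_filter.1 he).1
  rw [psi_prodPt hVsub s heE hU]
  refine mul_nonneg (prod_nonneg fun v hv => ?_) (prod_nonneg fun v hv => ?_)
  · exact (hs v (hVsub e heE (mem_sdiff.1 hv).1)).1
  · exact sub_nonneg.2 (hs v (hVsub e heE (hU hv))).2

lemma res_prodPt (hVsub : ∀ e ∈ E, e ⊆ V) (s : N → ℝ) :
    res V E (prodPt V (clE E) s) = prodPt V E s :=
  funext fun p => ev_prodPt s (mem_coords_clE_or_eq_empty_of_mem_coords hVsub p.2)

lemma prodPt_mem_mlSet (hVsub : ∀ e ∈ E, e ⊆ V) {s : N → ℝ} (hs : ∀ v ∈ V, s v = 0 ∨ s v = 1) :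
    prodPt V E s ∈ mlSet V E := by
  refine ⟨fun p => prod_induction _ (fun x => x = 0 ∨ x = 1) ?_ (Or.inr rfl)
    fun v hv => hs v (subset_of_mem_coords hVsub p.2 hv), fun e he => ?_⟩
  · rintro a b (rfl | rfl) (rfl | rfl) <;> simp
  · rw [ev_prodPt s (Or.inl (mem_coords_of_mem he))]
    refine prod_congr rfl fun v hv => ?_
    rw [ev_prodPt s (Or.inl (singleton_mem_coords (hVsub e he hv))), prod_singleton]

lemma eq_prodPt_of_mem_mlSet {y : Pt V E} (hy : y ∈ mlSet V E) :
    y = prodPt V E fun v => ev y {v} := by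
  funext ⟨p, hp⟩
  rw [← ev_of_mem y hp]
  rcases mem_union.1 hp with hpE | hpV
  · exact hy.2 p hpE
  · obtain ⟨v, -, rfl⟩ := mem_image.1 hpV
    exact (prod_singleton (fun u => ev y {u}) v).symm

lemma mlSet_subset_image_CER (hVsub : ∀ e ∈ E, e ⊆ V) :
    mlSet V E ⊆ (fun z : Pt V (clE E) => res V E z) '' CER V E := by
  intro y hy
  have hbin : ∀ v ∈ V, ev y {v} = 0 ∨ ev y {v} = 1 := fun v hv => by
    rw [ev_of_mem y (singleton_mem_coords hv)]
    exact hy.1 _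
  refine ⟨_, prodPt_mem_CER hVsub fun v hv => ?_, (res_prodPt hVsub _).trans
    (eq_prodPt_of_mem_mlSet hy).symm⟩
  rcases hbin v hv with h | h <;> rw [h] <;> norm_num

lemma convex_image_cerSet (V : Finset N) (E F : Finset (Finset N)) :
    Convex ℝ ((fun z : Pt V F => res V E z) '' cerSet V E F) := by
  rintro _ ⟨z₁, h₁, rfl⟩ _ ⟨z₂, h₂, rfl⟩ a b ha hb hab
  refine ⟨a • z₁ + b • z₂, fun e he U hU => ?_, funext fun p => ev_add_smul z₁ z₂ hab p.1⟩
  rw [psi_add_smul z₁ z₂ hab]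
  exact add_nonneg (mul_nonneg ha (h₁ e he U hU)) (mul_nonneg hb (h₂ e he U hU))

lemma MP_subset_image_CER (hVsub : ∀ e ∈ E, e ⊆ V) :
    MP V E ⊆ (fun z : Pt V (clE E) => res V E z) '' CER V E :=
  convexHull_min (mlSet_subset_image_CER hVsub) (convex_image_cerSet V E (clE E))

end ProductPoints

section Expansion

variable {V : Finset N} {E : Finset (Finset N)} {w : N} {f : Finset N}

lemma expRen_eq_biUnion (w : N) (f p : Finset N) :
    expRen w f p = p.biUnion fun v => expRen w f {v} := by
  ext x
  by_cases hw : w ∈ p <;> simp [expRen, hw] <;> grind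

lemma mem_expE {g : Finset N} :
    g ∈ expE E w f ↔ g = f ∨ (g ∈ E ∧ w ∉ g) ∨ ∃ e ∈ E, w ∈ e ∧ g = e.erase w ∪ f := by
  simp only [expE, mem_insert, mem_union, mem_filter, mem_image]
  grind

lemma expRen_of_mem {p : Finset N} (hw : w ∈ p) : expRen w f p = p.erase w ∪ f := by
  unfold expRen
  split_ifs with h
  · simp [h]
  · rfl

lemma expRen_of_notMem {p : Finset N} (hw : w ∉ p) : expRen w f p = p := by
  rw [expRen, if_neg (by rintro rfl; exact hw (mem_singleton_self w)), if_neg hw]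

lemma expRen_mem_expE {e : Finset N} (he : e ∈ E) : expRen w f e ∈ expE E w f := by
  by_cases hw : w ∈ e
  · rw [expRen_of_mem hw]
    exact mem_expE.2 (Or.inr (Or.inr ⟨e, he, hw, rfl⟩))
  · rw [expRen_of_notMem hw]
    exact mem_expE.2 (Or.inr (Or.inl ⟨he, hw⟩))

lemma expE_subset (hVsub : ∀ e ∈ E, e ⊆ V) : ∀ g ∈ expE E w f, g ⊆ V.erase w ∪ f := by
  intro g hg
  rcases mem_expE.1 hg with rfl | ⟨hgE, hwg⟩ | ⟨e, he, -, rfl⟩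
  · exact subset_union_right
  · exact fun v hv => mem_union_left _ (mem_erase.2 ⟨fun h => hwg (h ▸ hv), hVsub g hgE hv⟩)
  · exact union_subset_union (erase_subset_erase w (hVsub e he)) subset_rfl

lemma coords_expE_cases (hw : w ∈ V) {p : Finset N}
    (hp : p ∈ coords (V.erase w ∪ f) (expE E w f)) :
    (∃ q ∈ coords V E, w ∉ q ∧ p = q) ∨ (∃ q ∈ coords V E, w ∈ q ∧ p = q.erase w ∪ f) ∨
      ∃ v ∈ f, p = {v} := by
  rcases mem_union.1 hp with hpE | hpV
  · rcases mem_expE.1 hpE with rfl | ⟨hpE, hwp⟩ | ⟨e, he, hwe, rfl⟩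
    · exact Or.inr (Or.inl ⟨{w}, singleton_mem_coords hw, mem_singleton_self w, by simp⟩)
    · exact Or.inl ⟨p, mem_coords_of_mem hpE, hwp, rfl⟩
    · exact Or.inr (Or.inl ⟨e, mem_coords_of_mem he, hwe, rfl⟩)
  · obtain ⟨v, hv, rfl⟩ := mem_image.1 hpV
    rcases mem_union.1 hv with hv | hv
    · exact Or.inl ⟨{v}, singleton_mem_coords (mem_erase.1 hv).2,
        by simpa [eq_comm] using (mem_erase.1 hv).1, rfl⟩
    · exact Or.inr (Or.inr ⟨v, hv, rfl⟩)

lemma expRen_singleton_of_ne {x : N} (hx : x ≠ w) : expRen w f {x} = {x} :=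
  expRen_of_notMem (by simpa [eq_comm] using hx)

lemma singleton_subset_expRen {x : N} {p : Finset N} (hx : x ∈ p) (hxw : x ≠ w) :
    {x} ⊆ expRen w f p := by
  rw [← expRen_singleton_of_ne hxw, expRen_eq_biUnion w f p]
  exact subset_biUnion_of_mem (fun v => expRen w f {v}) hx

lemma mem_of_expRen_subset (hf : f.Nonempty) (hdisj : Disjoint f V) {g : Finset N} (hg : g ⊆ V)
    {x : N} (hx : x ∈ V) (h : expRen w f {x} ⊆ expRen w f g) : x ∈ g := by
  have hfg : ¬ f ⊆ g := fun hfg => hf.ne_empty (disjoint_self.1 (hdisj.mono_right (hfg.trans hg)))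
  by_cases hxw : x = w
  · subst hxw
    by_contra hwg
    rw [expRen_of_mem (mem_singleton_self x), expRen_of_notMem hwg] at h
    exact hfg (subset_union_right.trans h)
  · rw [expRen_singleton_of_ne hxw, singleton_subset_iff] at h
    by_cases hwg : w ∈ g
    · rw [expRen_of_mem hwg] at h
      rcases mem_union.1 h with h | h
      · exact mem_of_mem_erase h
      · exact absurd hx (disjoint_left.1 hdisj h)
    · rwa [expRen_of_notMem hwg] at h

lemma subset_of_expRen_subset (hf : f.Nonempty) (hdisj : Disjoint f V) {e g : Finset N}
    (he : e ⊆ V) (hg : g ⊆ V) (h : expRen w f e ⊆ expRen w f g) : e ⊆ g := fun _ hx =>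
  mem_of_expRen_subset hf hdisj hg (he hx) <| (expRen_eq_biUnion w f e ▸
    subset_biUnion_of_mem (fun v => expRen w f {v}) hx).trans h

lemma expRen_mem_maxEdges (hcard : ∀ e ∈ E, 2 ≤ #e) (hVsub : ∀ e ∈ E, e ⊆ V) (hf : f.Nonempty)
    (hdisj : Disjoint f V) {e : Finset N} (he : e ∈ maxEdges E) :
    expRen w f e ∈ maxEdges (expE E w f) := by
  obtain ⟨heE, hmax⟩ := mem_maxEdges.1 he
  refine mem_maxEdges.2 ⟨expRen_mem_expE heE, fun g hg hsub => ?_⟩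
  obtain rfl | ⟨g₀, hg₀, rfl⟩ : g = f ∨ ∃ g₀ ∈ E, g = expRen w f g₀ := by
    rcases mem_expE.1 hg with h | ⟨hgE, hwg⟩ | ⟨e₂, he₂, hwe₂, rfl⟩
    · exact Or.inl h
    · exact Or.inr ⟨g, hgE, (expRen_of_notMem hwg).symm⟩
    · exact Or.inr ⟨e₂, he₂, (expRen_of_mem hwe₂).symm⟩
  · obtain ⟨x, hx, hxw⟩ := exists_mem_ne (hcard e heE) w
    have hxf : x ∈ g := hsub (singleton_subset_iff.1 (singleton_subset_expRen hx hxw))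
    exact absurd (hVsub e heE hx) (disjoint_left.1 hdisj hxf)
  · rw [hmax g₀ hg₀ (subset_of_expRen_subset hf hdisj (hVsub e heE) (hVsub g₀ hg₀) hsub)]

end Expansion

section Contraction

variable {V : Finset N} {E : Finset (Finset N)} {w : N} {f : Finset N}

noncomputable def renamePt (V : Finset N) (E : Finset (Finset N)) (w : N) (f : Finset N)
    (z' : Pt (V.erase w ∪ f) (clE (expE E w f))) : Pt V (clE E) :=
  fun p => ev z' (expRen w f p.1)

lemma ev_renamePt (z' : Pt (V.erase w ∪ f) (clE (expE E w f))) {A : Finset N}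
    (hA : A ∈ coords V (clE E) ∨ A = ∅) : ev (renamePt V E w f z') A = ev z' (expRen w f A) := by
  rcases hA with hA | rfl
  · exact ev_of_mem _ hA
  · rw [ev_empty (fun _ => nonempty_of_mem_clE), expRen_of_notMem (notMem_empty w),
      ev_empty (fun _ => nonempty_of_mem_clE)]

lemma renamePt_mem_CER (hcard : ∀ e ∈ E, 2 ≤ #e) (hVsub : ∀ e ∈ E, e ⊆ V) (hf : f.Nonempty)
    (hdisj : Disjoint f V) {z' : Pt (V.erase w ∪ f) (clE (expE E w f))}
    (hz' : z' ∈ CER (V.erase w ∪ f) (expE E w f)) : renamePt V E w f z' ∈ CER V E := by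
  intro e he U hU
  have heE := (mem_maxEdges.1 he).1
  have hρ : ∀ v ∈ e \ U ∪ U, expRen w f {v} ⊆ expRen w f e := fun v hv => by
    rw [sdiff_union_of_subset hU] at hv
    rw [expRen_eq_biUnion w f e]
    exact subset_biUnion_of_mem (fun v => expRen w f {v}) hv
  rw [psi_eq_sum]
  refine (sum_sign_ev_biUnion_nonneg (hz' _ (expRen_mem_maxEdges hcard hVsub hf hdisj he)) _
    disjoint_sdiff_self_left hρ).trans_eq (sum_congr rfl fun W hW => ?_)
  rw [ev_renamePt z' (mem_coords_clE_or_eq_empty hVsub heE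
    (union_subset sdiff_subset ((mem_powerset.1 hW).trans hU))), ← expRen_eq_biUnion]

end Contraction

section Lift

/-- Weight of the pattern `F ⊆ f` in the lift of a binary point with `x_w = b`: the full pattern
`f` when `b = 1`; when `b = 0`, a pattern drawn from `D` conditioned on `F ≠ f`. -/
noncomputable def splitWeight (D : Finset N → ℝ) (f : Finset N) (b : ℝ) (F : Finset N) : ℝ :=
  if F = f then b else (1 - b) * (D F / (1 - D f))

noncomputable def expVal (f F : Finset N) (s : N → ℝ) : N → ℝ :=
  f.piecewise (fun v => if v ∈ F then 1 else 0) s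

variable {f : Finset N} {D : Finset N → ℝ}

lemma expVal_eq_zero_or_one {W : Finset N} {s : N → ℝ} (hs : ∀ v ∈ W, s v = 0 ∨ s v = 1)
    (F : Finset N) {v : N} (hv : v ∈ W ∪ f) : expVal f F s v = 0 ∨ expVal f F s v = 1 := by
  unfold expVal
  by_cases hvf : v ∈ f
  · rw [piecewise_eq_of_mem _ _ _ hvf]
    split_ifs <;> simp
  · rw [piecewise_eq_of_notMem _ _ _ hvf]
    exact hs v ((mem_union.1 hv).resolve_right hvf)

lemma splitWeight_nonneg (hD0 : ∀ F, 0 ≤ D F) (hDf : D f ≤ 1) {b : ℝ} (hb0 : 0 ≤ b)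
    (hb1 : b ≤ 1) (F : Finset N) : 0 ≤ splitWeight D f b F := by
  unfold splitWeight
  split_ifs
  · exact hb0
  · exact mul_nonneg (sub_nonneg.2 hb1) (div_nonneg (hD0 F) (sub_nonneg.2 hDf))

lemma sum_powerset_filter_superset_self (D : Finset N → ℝ) (f : Finset N) :
    ∑ F ∈ f.powerset with f ⊆ F, D F = D f := by
  rw [show {F ∈ f.powerset | f ⊆ F} = {f} by ext; simp [subset_antisymm_iff, and_comm],
    sum_singleton]

lemma marginal_anti (hD0 : ∀ F, 0 ≤ D F) {m : Finset N → ℝ}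
    (hD : ∀ A ⊆ f, ∑ F ∈ f.powerset with A ⊆ F, D F = m A) {A B : Finset N} (hAB : A ⊆ B)
    (hB : B ⊆ f) : m B ≤ m A := by
  rw [← hD B hB, ← hD A (hAB.trans hB)]
  refine sum_le_sum_of_subset_of_nonneg (fun F hF => ?_) fun F _ _ => hD0 F
  simp only [mem_filter] at hF ⊢
  exact ⟨hF.1, hAB.trans hF.2⟩

lemma sum_splitWeight_mul_ite {A : Finset N} (hA : A ⊆ f) (D : Finset N → ℝ) (b : ℝ) :
    ∑ F ∈ f.powerset, splitWeight D f b F * (if A ⊆ F then 1 else 0)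
      = b + (1 - b) * ((∑ F ∈ f.powerset with A ⊆ F, D F) - D f) / (1 - D f) := by
  rw [sum_filter, ← add_sum_erase _ _ (mem_powerset_self f),
    ← add_sum_erase _ _ (mem_powerset_self f)]
  simp only [splitWeight, if_pos hA, mul_one, add_sub_cancel_left, mul_div_assoc,
    sum_div, mul_sum]
  congr 1
  refine sum_congr rfl fun F hF => ?_
  rw [if_neg (ne_of_mem_erase hF)]
  split_ifs <;> ring

lemma prod_expVal (f F p : Finset N) (s : N → ℝ) :
    ∏ v ∈ p, expVal f F s v = (∏ v ∈ p \ f, s v) * if p ∩ f ⊆ F then 1 else 0 := by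
  unfold expVal
  rw [← prod_inter_mul_prod_sdiff p f, mul_comm]
  congr 1
  · exact prod_congr rfl fun v hv => piecewise_eq_of_notMem _ _ _ (mem_sdiff.1 hv).2
  · rw [prod_congr rfl fun v hv => piecewise_eq_of_mem f (fun v => if v ∈ F then (1 : ℝ) else 0) s
      (mem_inter.1 hv).2, prod_boole]
    exact if_congr Iff.rfl rfl rfl

lemma sum_lift_eq {ι : Type*} [Fintype ι] (lam : ι → ℝ) (s : ι → N → ℝ) (w : N)
    {m : Finset N → ℝ} (hD : ∀ A ⊆ f, ∑ F ∈ f.powerset with A ⊆ F, D F = m A) (p : Finset N) :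
    ∑ q ∈ univ ×ˢ f.powerset,
        lam q.1 * splitWeight D f (s q.1 w) q.2 * ∏ v ∈ p, expVal f q.2 (s q.1) v
      = ∑ i, lam i * (∏ v ∈ p \ f, s i v) *
          (s i w + (1 - s i w) * ((m (p ∩ f) - m f) / (1 - m f))) := by
  have hDf : D f = m f := (sum_powerset_filter_superset_self D f).symm.trans (hD f subset_rfl)
  rw [sum_product]
  refine sum_congr rfl fun i _ => ?_
  simp only [prod_expVal]
  rw [← hD _ inter_subset_right, ← hDf, ← mul_div_assoc,
    ← sum_splitWeight_mul_ite inter_subset_right, mul_sum]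
  exact sum_congr rfl fun _ _ => by ring

/-- When the total weight `v` of the points with `b i = 0` vanishes, so does each of their
weights; hence the junk value `v / v = 0` does no harm. -/
lemma sum_mul_mul_add_one_sub_mul_div_self {ι : Type*} [Fintype ι] {lam b : ι → ℝ}
    (hγ0 : ∀ i, 0 ≤ lam i * (1 - b i)) (a : ι → ℝ) :
    ∑ i, lam i * a i * (b i + (1 - b i) *
      ((∑ j, lam j * (1 - b j)) / ∑ j, lam j * (1 - b j))) = ∑ i, lam i * a i := by
  by_cases hv : ∑ j, lam j * (1 - b j) = 0
  · have hγ := (sum_eq_zero_iff_of_nonneg fun i _ => hγ0 i).1 hv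
    rw [hv, div_zero]
    refine sum_congr rfl fun i hi => ?_
    linear_combination (-a i) * hγ i hi
  · simp [div_self hv]

lemma sum_lift_weight_eq_one {ι : Type*} [Fintype ι] {lam : ι → ℝ} {s : ι → N → ℝ} {w : N}
    {m : Finset N → ℝ} (hD : ∀ A ⊆ f, ∑ F ∈ f.powerset with A ⊆ F, D F = m A) (hm : m ∅ = 1)
    (hγ0 : ∀ i, 0 ≤ lam i * (1 - s i w)) (hlam1 : ∑ i, lam i = 1)
    (hb : ∑ i, lam i * s i w = m f) :
    ∑ q ∈ univ ×ˢ f.powerset, lam q.1 * splitWeight D f (s q.1 w) q.2 = 1 := by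
  have hγ : ∑ i, lam i * (1 - s i w) = 1 - m f := by
    simp only [mul_sub, mul_one, sum_sub_distrib, hlam1, hb]
  have h := sum_lift_eq lam s w hD ∅
  simp only [prod_empty, empty_inter, empty_sdiff, hm, ← hγ] at h
  rw [sum_mul_mul_add_one_sub_mul_div_self hγ0 fun _ => 1] at h
  simpa only [mul_one, hlam1] using h

end Lift

section LiftExpansion

variable {V : Finset N} {E : Finset (Finset N)} {w : N} {f : Finset N} {ι : Type*} [Fintype ι]
  {lam : ι → ℝ} {s : ι → N → ℝ} {z' : Pt (V.erase w ∪ f) (clE (expE E w f))}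

lemma lift_coord_eq (hw : w ∈ V) (hVsub : ∀ e ∈ E, e ⊆ V) (hdisj : Disjoint f V)
    (hγ0 : ∀ i, 0 ≤ lam i * (1 - s i w)) (hlam1 : ∑ i, lam i = 1)
    (hmix : ∀ q ∈ coords V E, ∑ i, lam i * ∏ v ∈ q, s i v = ev z' (expRen w f q))
    (hb : ∑ i, lam i * s i w = ev z' f) (hmarg : ∀ A ⊆ f, ev z' f ≤ ev z' A ∧ ev z' A ≤ 1)
    {p : Finset N} (hp : p ∈ coords (V.erase w ∪ f) (expE E w f)) :
    ∑ i, lam i * (∏ v ∈ p \ f, s i v) *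
      (s i w + (1 - s i w) * ((ev z' (p ∩ f) - ev z' f) / (1 - ev z' f))) = ev z' p := by
  have hγ : ∑ i, lam i * (1 - s i w) = 1 - ev z' f := by
    simp only [mul_sub, mul_one, sum_sub_distrib, hlam1, hb]
  rcases coords_expE_cases hw hp with ⟨_, hq, hwp, rfl⟩ | ⟨q, hq, hwq, rfl⟩ | ⟨v, hv, rfl⟩
  · have hpf : Disjoint p f := (hdisj.mono_right (subset_of_mem_coords hVsub hq)).symm
    rw [disjoint_iff_inter_eq_empty.1 hpf, sdiff_eq_self_of_disjoint hpf,
      ev_empty (fun _ => nonempty_of_mem_clE), ← hγ,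
      sum_mul_mul_add_one_sub_mul_div_self hγ0, hmix p hq, expRen_of_notMem hwp]
  · have hqf : Disjoint (q.erase w) f :=
      (hdisj.mono_right ((erase_subset w q).trans (subset_of_mem_coords hVsub hq))).symm
    rw [union_inter_cancel_right, union_sdiff_cancel_right hqf, sub_self, zero_div,
      ← expRen_of_mem hwq, ← hmix q hq]
    exact sum_congr rfl fun i _ => by rw [← mul_prod_erase q (s i) hwq]; ring
  · have hvf : {v} ⊆ f := singleton_subset_iff.2 hv
    obtain ⟨hfv, hv1⟩ := hmarg {v} hvf
    rw [inter_eq_left.2 hvf, sdiff_eq_empty_iff_subset.2 hvf]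
    simp only [prod_empty, mul_one, mul_add, sum_add_distrib, ← mul_assoc, ← sum_mul, hb, hγ]
    rw [mul_div_cancel_of_imp' fun h => by linarith]
    ring

lemma res_mem_MP_of_mixture (hw : w ∈ V) (hVsub : ∀ e ∈ E, e ⊆ V) (hdisj : Disjoint f V)
    (hlam0 : ∀ i, 0 ≤ lam i) (hlam1 : ∑ i, lam i = 1)
    (hs : ∀ i, ∀ v ∈ V, s i v = 0 ∨ s i v = 1)
    (hmix : ∀ q ∈ coords V E, ∑ i, lam i * ∏ v ∈ q, s i v = ev z' (expRen w f q))
    {D : Finset N → ℝ} (hD0 : ∀ F, 0 ≤ D F)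
    (hD : ∀ A ⊆ f, ∑ F ∈ f.powerset with A ⊆ F, D F = ev z' A) :
    res (V.erase w ∪ f) (expE E w f) z' ∈ MP (V.erase w ∪ f) (expE E w f) := by
  have hempty : ev z' ∅ = 1 := ev_empty (fun _ => nonempty_of_mem_clE) z'
  have hb : ∑ i, lam i * s i w = ev z' f := by
    simpa [expRen_of_mem] using hmix {w} (singleton_mem_coords hw)
  have hmarg : ∀ A ⊆ f, ev z' f ≤ ev z' A ∧ ev z' A ≤ 1 := fun A hA =>
    ⟨marginal_anti hD0 hD hA subset_rfl, hempty ▸ marginal_anti hD0 hD (empty_subset A) hA⟩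
  have hsw : ∀ i, 0 ≤ s i w ∧ s i w ≤ 1 := fun i => by
    rcases hs i w hw with h | h <;> rw [h] <;> norm_num
  have hγ0 : ∀ i, 0 ≤ lam i * (1 - s i w) := fun i => mul_nonneg (hlam0 i) (sub_nonneg.2 (hsw i).2)
  have hres : res (V.erase w ∪ f) (expE E w f) z' = ∑ q ∈ univ ×ˢ f.powerset,
      (lam q.1 * splitWeight D f (s q.1 w) q.2) • prodPt _ _ (expVal f q.2 (s q.1)) := by
    funext p
    rw [Finset.sum_apply]
    simp only [Pi.smul_apply, smul_eq_mul, prodPt]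
    rw [sum_lift_eq lam s w hD, lift_coord_eq hw hVsub hdisj hγ0 hlam1 hmix hb hmarg p.2]
    rfl
  have hDf : D f ≤ 1 := by
    rw [← sum_powerset_filter_superset_self D f, hD f subset_rfl]
    exact (hmarg f subset_rfl).2
  rw [hres]
  refine (convex_convexHull ℝ _).sum_mem (fun q _ => mul_nonneg (hlam0 _)
    (splitWeight_nonneg hD0 hDf (hsw _).1 (hsw _).2 _))
    (sum_lift_weight_eq_one hD hempty hγ0 hlam1 hb) fun q _ => subset_convexHull ℝ _ ?_
  exact prodPt_mem_mlSet (expE_subset hVsub) fun v hv => expVal_eq_zero_or_one (hs q.1) q.2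
    (union_subset_union (erase_subset w V) subset_rfl hv)

end LiftExpansion

lemma res_mem_MP_expE_of_mem_CER {V : Finset N} {E : Finset (Finset N)} {w : N}
    {f : Finset N} (hcard : ∀ e ∈ E, 2 ≤ #e) (hVsub : ∀ e ∈ E, e ⊆ V) (hw : w ∈ V)
    (hf : f.Nonempty) (hdisj : Disjoint f V) (hext : IsExtension V E)
    {z' : Pt (V.erase w ∪ f) (clE (expE E w f))} (hz' : z' ∈ CER (V.erase w ∪ f) (expE E w f)) :
    res (V.erase w ∪ f) (expE E w f) z' ∈ MP (V.erase w ∪ f) (expE E w f) := by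
  have hx : res V E (renamePt V E w f z') ∈ MP V E :=
    hext ▸ ⟨_, renamePt_mem_CER hcard hVsub hf hdisj hz', rfl⟩
  obtain ⟨ι, _, lam, y, hlam0, hlam1, hy, hxy⟩ := mem_convexHull_iff_exists_fintype.1 hx
  obtain ⟨g, hg, hfg⟩ := exists_mem_maxEdges_superset (mem_expE.2 (Or.inl rfl) : f ∈ expE E w f)
  refine res_mem_MP_of_mixture (s := fun i v => ev (y i) {v}) (D := fun F => psi z' (f \ F) f)
    hw hVsub hdisj hlam0 hlam1 (fun i v hv => ?_) (fun q hq => ?_)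
    (fun F => psi_nonneg_of_subset (hz' g hg) hfg sdiff_subset) fun A hA => sum_psi_of_subset z' hA
  · rw [ev_of_mem _ (singleton_mem_coords hv)]
    exact (hy i).1 _
  · rw [← ev_renamePt z' (mem_coords_clE_or_eq_empty_of_mem_coords hVsub hq)]
    have hcoord := congrFun hxy ⟨q, hq⟩
    rw [Finset.sum_apply] at hcoord
    simp only [Pi.smul_apply, smul_eq_mul] at hcoord
    refine (sum_congr rfl fun i _ => ?_).trans hcoord
    exact congrArg (lam i * ·) (congrFun (eq_prodPt_of_mem_mlSet (hy i)) ⟨q, hq⟩).symm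

theorem stmt14_general {N : Type*} [DecidableEq N] (V : Finset N) (E : Finset (Finset N))
    (hcard : ∀ e ∈ E, 2 ≤ e.card) (hVsub : ∀ e ∈ E, e ⊆ V)
    (w : N) (hw : w ∈ V) (f : Finset N) (hf : f.Nonempty) (hdisj : Disjoint f V)
    (hext : IsExtension V E) :
    IsExtension (V.erase w ∪ f) (expE E w f) :=
  (MP_subset_image_CER (expE_subset hVsub)).antisymm fun _ ⟨_, hz', hres⟩ =>
    hres ▸ res_mem_MP_expE_of_mem_CER hcard hVsub hw hf hdisj hext hz'

theorem stmt14 {N : Type*} [DecidableEq N] (V : Finset N) (E : Finset (Finset N))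
    (hcard : ∀ e ∈ E, 2 ≤ e.card) (hVsub : ∀ e ∈ E, e ⊆ V)
    (hcover : ∀ v ∈ V, ∃ e ∈ E, v ∈ e)
    (w : N) (hw : w ∈ V) (f : Finset N) (hf : f.Nonempty) (hdisj : Disjoint f V)
    (hext : IsExtension V E) :
    IsExtension (V.erase w ∪ f) (expE E w f) :=
  stmt14_general V E hcard hVsub w hw f hf hdisj hext

end BPO
end

section
/- Let G = (V,E) be a hypergraph that contains a simple cycle, and let ℓ denote the minimum length of a simple cycle in G. If ℓ ≥ 4, then there exists a hypergraph G', obtained from G by a finite sequence of node-expansion and node-contraction operations, that contains a simple cycle of length at most ℓ − 1. -/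
open Finset

namespace BPO

variable {N : Type*} [DecidableEq N]

/-- A single node-expansion or node-contraction step between hypergraphs. -/
inductive Step {N : Type*} [DecidableEq N] :
    Finset N × Finset (Finset N) → Finset N × Finset (Finset N) → Prop
  | expand (V : Finset N) (E : Finset (Finset N)) (w : N) (f : Finset N)
      (hw : w ∈ V) (hf : f.Nonempty) (hd : Disjoint f V) :
      Step (V, E) (V.erase w ∪ f, expE E w f)
  | contract (V : Finset N) (E : Finset (Finset N)) (u w : N)
      (hu : u ∈ V) (hw : w ∈ V) (huw : u ≠ w) (he : ∃ e ∈ E, u ∈ e ∧ w ∈ e) :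
      Step (V, E) (V.erase w, contrE E u w)

/-!
Take a shortest simple cycle `e_1, …, e_ℓ` whose corners `s_i = e_i ∩ e_{i+1}` have maximal total
size. Replacing an edge of it by another edge through two consecutive corners cannot enlarge any
corner; together with the minimality of `ℓ` this shows that there are nodes `u ∈ s_ℓ \ e_2` and
`w ∈ s_1 \ e_ℓ`, and that `u` lies on no edge `e_2, …, e_{ℓ-1}` and `w` on no edge
`e_3, …, e_ℓ`. Contracting `w` to `u` turns `e_2, …, e_ℓ` into a cyclic sequence of length `ℓ - 1`
in which no edge contains three consecutive corners, and every such sequence contains a simple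
cycle at most as long as itself.
-/

section Cycles

variable {E : Finset (Finset N)} {ℓ m n d : ℕ} {c c' : ℕ → Finset N}

lemma cycS_of_ne {i : ℕ} (h : i ≠ ℓ) : cycS c ℓ i = c i ∩ c (i + 1) := by
  rw [cycS, if_neg h]

lemma cycS_self : cycS c ℓ ℓ = c ℓ ∩ c 1 := by
  rw [cycS, if_pos rfl]

lemma cycS_subset_left {i : ℕ} : cycS c ℓ i ⊆ c i :=
  inter_subset_left

lemma cycS_subset_right {i : ℕ} (h : i ≠ ℓ) : cycS c ℓ i ⊆ c (i + 1) := by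
  rw [cycS_of_ne h]
  exact inter_subset_right

def TripleCovered (E : Finset (Finset N)) (ℓ : ℕ) (c : ℕ → Finset N) (i j k : ℕ) : Prop :=
  ∃ e ∈ E, cycS c ℓ i ∪ cycS c ℓ j ∪ cycS c ℓ k ⊆ e

lemma isSimpleCycle_iff : IsSimpleCycle E ℓ c ↔ 3 ≤ ℓ ∧ (∀ i, 1 ≤ i → i ≤ ℓ → c i ∈ E) ∧
    ∀ i j k, 1 ≤ i → i < j → j < k → k ≤ ℓ → ¬ TripleCovered E ℓ c i j k := by
  simp only [IsSimpleCycle, TripleCovered, sdiff_nonempty, not_exists, not_and]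

lemma exists_tripleCovered_of_not_isSimpleCycle (hℓ : 3 ≤ ℓ)
    (hmem : ∀ i, 1 ≤ i → i ≤ ℓ → c i ∈ E) (h : ¬ IsSimpleCycle E ℓ c) :
    ∃ i j k, 1 ≤ i ∧ i < j ∧ j < k ∧ k ≤ ℓ ∧ TripleCovered E ℓ c i j k := by
  by_contra! hno
  exact h (isSimpleCycle_iff.2 ⟨hℓ, hmem, hno⟩)

def IsLocallySimple (E : Finset (Finset N)) (ℓ : ℕ) (c : ℕ → Finset N) : Prop :=
  3 ≤ ℓ ∧ (∀ i, 1 ≤ i → i ≤ ℓ → c i ∈ E) ∧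
    ∀ i, 1 ≤ i → i + 2 ≤ ℓ → ¬ TripleCovered E ℓ c i (i + 1) (i + 2)

lemma IsSimpleCycle.isLocallySimple (hc : IsSimpleCycle E ℓ c) : IsLocallySimple E ℓ c := by
  obtain ⟨hℓ, hmem, hS⟩ := isSimpleCycle_iff.1 hc
  exact ⟨hℓ, hmem, fun i hi hiℓ => hS i (i + 1) (i + 2) hi (by omega) (by omega) hiℓ⟩

lemma TripleCovered.of_cycS_subset
    (hsub : ∀ t, 1 ≤ t → t ≤ n → cycS c ℓ (t + d) ⊆ cycS c' m t) {i j k : ℕ}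
    (hi : 1 ≤ i) (hij : i < j) (hjk : j < k) (hk : k ≤ n) (h : TripleCovered E m c' i j k) :
    TripleCovered E ℓ c (i + d) (j + d) (k + d) := by
  obtain ⟨e, he, hcov⟩ := h
  refine ⟨e, he, subset_trans ?_ hcov⟩
  gcongr
  exacts [hsub i hi (by omega), hsub j (by omega) (by omega), hsub k (by omega) hk]

lemma IsSimpleCycle.of_cycS_subset (hc : IsSimpleCycle E ℓ c) (hm : 3 ≤ m)
    (hmem : ∀ t, 1 ≤ t → t ≤ m → c' t ∈ E) (hd : m + d ≤ ℓ)
    (hsub : ∀ t, 1 ≤ t → t ≤ m → cycS c ℓ (t + d) ⊆ cycS c' m t) : IsSimpleCycle E m c' := by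
  refine isSimpleCycle_iff.2 ⟨hm, hmem, fun i j k hi hij hjk hk hcov => ?_⟩
  exact (isSimpleCycle_iff.1 hc).2.2 _ _ _ (by omega) (by omega) (by omega) (by omega)
    (hcov.of_cycS_subset hsub hi hij hjk hk)

lemma IsLocallySimple.of_cycS_subset (hc : IsLocallySimple E ℓ c) (hm : 3 ≤ m)
    (hmem : ∀ t, 1 ≤ t → t ≤ m → c' t ∈ E) (hd : m + d ≤ ℓ + 1)
    (hsub : ∀ t, 1 ≤ t → t < m → cycS c ℓ (t + d) ⊆ cycS c' m t)
    (hlast : ¬ TripleCovered E m c' (m - 2) (m - 1) m) : IsLocallySimple E m c' := by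
  refine ⟨hm, hmem, fun i hi him hcov => ?_⟩
  by_cases hi' : i + 3 ≤ m
  · have := hcov.of_cycS_subset (n := m - 1) (fun t ht htm => hsub t ht (by omega)) hi
      (by omega) (by omega) (by omega)
    rw [show i + 1 + d = i + d + 1 by omega, show i + 2 + d = i + d + 2 by omega] at this
    exact hc.2.2 (i + d) (by omega) (by omega) this
  · rw [show i = m - 2 by omega, show m - 2 + 1 = m - 1 by omega,
      show m - 2 + 2 = m by omega] at hcov
    exact hlast hcov

lemma IsLocallySimple.exists_wide_pair (h : IsLocallySimple E ℓ c) {i j k : ℕ} (hi : 1 ≤ i)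
    (hij : i < j) (hjk : j < k) (hk : k ≤ ℓ) (hcov : TripleCovered E ℓ c i j k) :
    ∃ a b, i ≤ a ∧ a + 2 ≤ b ∧ b ≤ k ∧ b - a < k - i ∧
      ∃ e ∈ E, cycS c ℓ a ⊆ e ∧ cycS c ℓ b ⊆ e := by
  obtain ⟨e, he, hsub⟩ := id hcov
  obtain ⟨⟨hie, hje⟩, hke⟩ := by simpa only [union_subset_iff] using hsub
  by_cases hij2 : i + 2 ≤ j
  · exact ⟨i, j, le_rfl, hij2, hjk.le, by omega, e, he, hie, hje⟩
  by_cases hjk2 : j + 2 ≤ k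
  · exact ⟨j, k, hij.le, hjk2, le_rfl, by omega, e, he, hje, hke⟩
  obtain rfl : j = i + 1 := by omega
  obtain rfl : k = i + 2 := by omega
  exact absurd hcov (h.2.2 i hi hk)

/-- An edge `g` through the corners `s_a` and `s_b` closes the shortcut `g, e_{a+1}, …, e_b`,
whose corners contain `s_a, …, s_b`. -/
lemma IsLocallySimple.exists_isSimpleCycle_of_pair (h : IsLocallySimple E ℓ c) {a b : ℕ}
    {g : Finset N} (ha : 1 ≤ a) (hab : a + 2 ≤ b) (hb : b ≤ ℓ) (hg : g ∈ E)
    (hag : cycS c ℓ a ⊆ g) (hbg : cycS c ℓ b ⊆ g) :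
    ∃ m c', m ≤ b - a + 1 ∧ IsSimpleCycle E m c' := by
  induction hn : b - a using Nat.strong_induction_on generalizing a b g with
  | _ n ih =>
  set B : ℕ → Finset N := Function.update (fun t => c (t + (a - 1))) 1 g
  have hB1 : B 1 = g := Function.update_self ..
  have hBt : ∀ t, t ≠ 1 → B t = c (t + (a - 1)) := fun t ht => Function.update_of_ne ht ..
  have hmem : ∀ t, 1 ≤ t → t ≤ b - a + 1 → B t ∈ E := by
    intro t ht htm
    rcases eq_or_ne t 1 with rfl | ht1
    · exact hB1 ▸ hg
    · exact hBt t ht1 ▸ h.2.1 _ (by omega) (by omega)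
  have hsub : ∀ t, 1 ≤ t → t ≤ b - a + 1 → cycS c ℓ (t + (a - 1)) ⊆ cycS B (b - a + 1) t := by
    intro t ht htm
    rcases eq_or_ne t 1 with rfl | ht1
    · rw [cycS_of_ne (c := B) (by omega), hB1, hBt 2 (by omega), show 1 + (a - 1) = a by omega,
        show 2 + (a - 1) = a + 1 by omega]
      exact subset_inter hag (cycS_subset_right (by omega))
    by_cases htM : t = b - a + 1
    · rw [htM, cycS_self, hB1, hBt _ (by omega), show b - a + 1 + (a - 1) = b by omega]
      exact subset_inter cycS_subset_left hbg
    · rw [cycS_of_ne htM, hBt _ ht1, hBt _ (by omega), cycS_of_ne (by omega),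
        show t + 1 + (a - 1) = t + (a - 1) + 1 by omega]
  by_cases hB : IsSimpleCycle E (b - a + 1) B
  · exact ⟨_, B, by omega, hB⟩
  obtain ⟨p, q, r, hp, hpq, hqr, hr, hcov⟩ :=
    exists_tripleCovered_of_not_isSimpleCycle (by omega) hmem hB
  obtain ⟨a', b', ha', hab', hb', hlt, g', hg', ha'g, hb'g⟩ := h.exists_wide_pair (by omega)
    (by omega) (by omega) (by omega) (hcov.of_cycS_subset hsub hp hpq hqr hr)
  obtain ⟨m, c', hm, hc'⟩ := ih (b' - a') (by omega) (by omega) hab' (by omega) hg' ha'g hb'g rfl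
  exact ⟨m, c', by omega, hc'⟩

lemma IsLocallySimple.exists_isSimpleCycle (h : IsLocallySimple E ℓ c) :
    ∃ m c', m ≤ ℓ ∧ IsSimpleCycle E m c' := by
  by_cases hc : IsSimpleCycle E ℓ c
  · exact ⟨ℓ, c, le_rfl, hc⟩
  obtain ⟨i, j, k, hi, hij, hjk, hk, hcov⟩ :=
    exists_tripleCovered_of_not_isSimpleCycle h.1 h.2.1 hc
  obtain ⟨a, b, hia, hab, hbk, -, e, he, hae, hbe⟩ := h.exists_wide_pair hi hij hjk hk hcov
  obtain ⟨m, c', hm, hc'⟩ := h.exists_isSimpleCycle_of_pair (by omega) hab (by omega) he hae hbe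
  exact ⟨m, c', by omega, hc'⟩

end Cycles

section Extremal

variable {E : Finset (Finset N)} {ℓ : ℕ} {c c' : ℕ → Finset N}

def cornerSum (ℓ : ℕ) (c : ℕ → Finset N) : ℕ :=
  ∑ i ∈ Icc 1 ℓ, #(cycS c ℓ i)

lemma cornerSum_le (hmem : ∀ i, 1 ≤ i → i ≤ ℓ → c i ∈ E) :
    cornerSum ℓ c ≤ ℓ * #(E.sup id) := by
  calc cornerSum ℓ c ≤ #(Icc 1 ℓ) • #(E.sup id) := by
        refine sum_le_card_nsmul _ _ _ fun i hi => card_le_card ?_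
        rw [mem_Icc] at hi
        exact cycS_subset_left.trans (le_sup (f := id) (hmem i hi.1 hi.2))
    _ = ℓ * #(E.sup id) := by simp

lemma cycS_eq_of_cornerSum_le (hsub : ∀ i, 1 ≤ i → i ≤ ℓ → cycS c ℓ i ⊆ cycS c' ℓ i)
    (hle : cornerSum ℓ c' ≤ cornerSum ℓ c) {i : ℕ} (hi : 1 ≤ i) (hiℓ : i ≤ ℓ) :
    cycS c' ℓ i = cycS c ℓ i := by
  have hcard : ∀ i ∈ Icc 1 ℓ, #(cycS c ℓ i) ≤ #(cycS c' ℓ i) := fun i hi =>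
    card_le_card (hsub i (mem_Icc.1 hi).1 (mem_Icc.1 hi).2)
  have := (sum_eq_sum_iff_of_le hcard).1 (le_antisymm (sum_le_sum hcard) hle) i
    (mem_Icc.2 ⟨hi, hiℓ⟩)
  exact (eq_of_subset_of_card_le (hsub i hi hiℓ) this.ge).symm

def IsExtremalCycle (E : Finset (Finset N)) (ℓ : ℕ) (c : ℕ → Finset N) : Prop :=
  IsSimpleCycle E ℓ c ∧ (∀ m c', IsSimpleCycle E m c' → ℓ ≤ m) ∧
    ∀ c', IsSimpleCycle E ℓ c' → cornerSum ℓ c' ≤ cornerSum ℓ c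

lemma exists_isExtremalCycle (hex : ∃ c, IsSimpleCycle E ℓ c)
    (hmin : ∀ m c, IsSimpleCycle E m c → ℓ ≤ m) : ∃ c, IsExtremalCycle E ℓ c := by
  have hbdd : BddAbove (cornerSum ℓ '' {c | IsSimpleCycle E ℓ c}) :=
    ⟨ℓ * #(E.sup id), by rintro _ ⟨c, hc, rfl⟩; exact cornerSum_le hc.2.1⟩
  obtain ⟨c, hc, hcmax⟩ := Nat.sSup_mem (Set.Nonempty.image _ hex) hbdd
  exact ⟨c, hc, hmin, fun c' hc' => hcmax ▸ le_csSup hbdd ⟨c', hc', rfl⟩⟩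

/-- Replacing `e_{a+1}` by `g` gives a simple cycle whose corners contain the old ones, so by
maximality they are equal. -/
lemma IsExtremalCycle.inter_eq_of_cycS_subset (hc : IsExtremalCycle E ℓ c) {a : ℕ}
    {g : Finset N} (ha : 1 ≤ a) (haℓ : a + 2 ≤ ℓ) (hg : g ∈ E) (hag : cycS c ℓ a ⊆ g)
    (hag1 : cycS c ℓ (a + 1) ⊆ g) :
    c a ∩ g = cycS c ℓ a ∧ g ∩ c (a + 2) = cycS c ℓ (a + 1) := by
  set c' := Function.update c (a + 1) g
  have h_a : cycS c' ℓ a = c a ∩ g := by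
    rw [cycS_of_ne (by omega)]
    simp [c']
  have h_a1 : cycS c' ℓ (a + 1) = g ∩ c (a + 2) := by
    rw [cycS_of_ne (by omega)]
    simp [c']
  have hsub : ∀ i, 1 ≤ i → i ≤ ℓ → cycS c ℓ i ⊆ cycS c' ℓ i := by
    intro i hi hiℓ
    by_cases hia : i = a
    · rw [hia, h_a]
      exact subset_inter cycS_subset_left hag
    by_cases hia1 : i = a + 1
    · rw [hia1, h_a1]
      exact subset_inter hag1 (cycS_subset_right (by omega))
    · have hnext : (if i = ℓ then 1 else i + 1) ≠ a + 1 := by split_ifs <;> omega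
      simp only [cycS, c', Function.update_of_ne hia1, Function.update_of_ne hnext, le_rfl]
  have hmem : ∀ i, 1 ≤ i → i ≤ ℓ → c' i ∈ E := by
    intro i hi hiℓ
    rcases eq_or_ne i (a + 1) with rfl | hia1
    · simpa [c'] using hg
    · simpa [c', hia1] using hc.1.2.1 i hi hiℓ
  have hc' : IsSimpleCycle E ℓ c' := hc.1.of_cycS_subset (d := 0) hc.1.1 hmem le_rfl hsub
  have heq : ∀ i, 1 ≤ i → i ≤ ℓ → cycS c' ℓ i = cycS c ℓ i := fun _ =>
    cycS_eq_of_cornerSum_le hsub (hc.2.2 c' hc')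
  exact ⟨h_a ▸ heq a ha (by omega), h_a1 ▸ heq (a + 1) (by omega) (by omega)⟩

lemma IsSimpleCycle.tail (hc : IsSimpleCycle E ℓ c) (hℓ : 4 ≤ ℓ) (h : cycS c ℓ ℓ ⊆ c 2) :
    IsSimpleCycle E (ℓ - 1) (fun t => c (t + 1)) := by
  refine hc.of_cycS_subset (d := 1) (by omega) (fun t ht htℓ => hc.2.1 _ (by omega) (by omega))
    (by omega) fun t ht htℓ => ?_
  by_cases ht' : t = ℓ - 1
  · rw [ht', cycS_self, show ℓ - 1 + 1 = ℓ by omega]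
    exact subset_inter cycS_subset_left h
  · rw [cycS_of_ne ht', cycS_of_ne (by omega)]

lemma IsExtremalCycle.exists_mem_last_notMem_two (hc : IsExtremalCycle E ℓ c) (hℓ : 4 ≤ ℓ) :
    ∃ u, u ∈ c ℓ ∧ u ∈ c 1 ∧ u ∉ c 2 := by
  have hnot : ¬ cycS c ℓ ℓ ⊆ c 2 := fun h => by
    have := hc.2.1 _ _ (hc.1.tail hℓ h)
    omega
  obtain ⟨u, hu, hu2⟩ := not_subset.1 hnot
  rw [cycS_self, mem_inter] at hu
  exact ⟨u, hu.1, hu.2, hu2⟩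

/-- The cycle traversed backwards from `e_1`: `e_1, e_ℓ, e_{ℓ-1}, …, e_2`. -/
def revCycle (ℓ : ℕ) (c : ℕ → Finset N) (t : ℕ) : Finset N :=
  if t = 1 then c 1 else c (ℓ + 2 - t)

lemma cycS_revCycle (hℓ : 3 ≤ ℓ) {i : ℕ} (hi : 1 ≤ i) (hiℓ : i ≤ ℓ) :
    cycS (revCycle ℓ c) ℓ i = cycS c ℓ (ℓ + 1 - i) := by
  unfold cycS revCycle
  rw [inter_comm]
  split_ifs <;> first | omega | (congr 2 <;> omega)

lemma IsSimpleCycle.revCycle (hc : IsSimpleCycle E ℓ c) : IsSimpleCycle E ℓ (revCycle ℓ c) := by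
  obtain ⟨hℓ, hmem, hS⟩ := isSimpleCycle_iff.1 hc
  refine isSimpleCycle_iff.2 ⟨hℓ, fun i hi hiℓ => ?_, fun i j k hi hij hjk hk hcov => ?_⟩
  · unfold BPO.revCycle
    split_ifs
    exacts [hmem 1 le_rfl (by omega), hmem _ (by omega) (by omega)]
  · obtain ⟨e, he, hsub⟩ := hcov
    rw [cycS_revCycle hℓ hi (by omega), cycS_revCycle hℓ (by omega) (by omega),
      cycS_revCycle hℓ (by omega) hk] at hsub
    refine hS (ℓ + 1 - k) (ℓ + 1 - j) (ℓ + 1 - i) (by omega) (by omega) (by omega) (by omega)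
      ⟨e, he, subset_trans ?_ hsub⟩
    intro x
    simp only [mem_union]
    tauto

lemma cornerSum_revCycle (hℓ : 3 ≤ ℓ) : cornerSum ℓ (revCycle ℓ c) = cornerSum ℓ c := by
  refine sum_nbij' (fun i => ℓ + 1 - i) (fun i => ℓ + 1 - i) ?_ ?_ ?_ ?_ fun i hi => ?_
  any_goals intro i hi; simp only [mem_Icc] at hi ⊢; omega
  rw [mem_Icc] at hi
  rw [cycS_revCycle hℓ hi.1 hi.2]

lemma IsExtremalCycle.revCycle (hc : IsExtremalCycle E ℓ c) :
    IsExtremalCycle E ℓ (revCycle ℓ c) :=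
  ⟨hc.1.revCycle, hc.2.1, fun c' hc' => by rw [cornerSum_revCycle hc.1.1]; exact hc.2.2 c' hc'⟩

lemma IsExtremalCycle.exists_mem_two_notMem_last (hc : IsExtremalCycle E ℓ c) (hℓ : 4 ≤ ℓ) :
    ∃ w, w ∈ c 1 ∧ w ∈ c 2 ∧ w ∉ c ℓ := by
  obtain ⟨w, hwℓ, hw1, hw2⟩ := hc.revCycle.exists_mem_last_notMem_two hℓ
  rw [BPO.revCycle, if_neg (by omega), show ℓ + 2 - ℓ = 2 by omega] at hwℓ
  rw [BPO.revCycle, if_neg (by omega), show ℓ + 2 - 2 = ℓ by omega] at hw2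
  rw [BPO.revCycle, if_pos rfl] at hw1
  exact ⟨w, hw1, hwℓ, hw2⟩

/-- If the prefix `e_1, …, e_{y+1}` of the cycle had no edge through its last three corners, it
would be a shorter locally simple sequence; the edge through them pins `z` to `e_y`. -/
lemma IsExtremalCycle.notMem_of_notMem_two (hc : IsExtremalCycle E ℓ c) {z : N}
    (hz1 : z ∈ c 1) (hz2 : z ∉ c 2) {y : ℕ} (hy : 2 ≤ y) (hyℓ : y < ℓ) : z ∉ c y := by
  induction y, hy using Nat.le_induction with
  | base => exact hz2
  | succ y hy ih =>
    intro hzy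
    have hcorner : ∀ t, t < y + 1 → cycS c (y + 1) t = cycS c ℓ t := fun t ht => by
      rw [cycS_of_ne (ℓ := y + 1) (by omega), cycS_of_ne (ℓ := ℓ) (by omega)]
    have hpre : IsLocallySimple E (y + 1) c := by
      refine hc.1.isLocallySimple.of_cycS_subset (d := 0) (by omega)
        (fun t ht htm => hc.1.2.1 t ht (by omega)) (by omega) (fun t ht htm => ?_) ?_
      · exact (hcorner t htm).ge
      · rintro ⟨h, hh, hcov⟩
        rw [show y + 1 - 2 = y - 1 by omega, show y + 1 - 1 = y by omega, cycS_self,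
          hcorner (y - 1) (by omega), hcorner y (by omega), union_subset_iff,
          union_subset_iff] at hcov
        obtain ⟨⟨hy1h, hyh⟩, hlast⟩ := hcov
        have hrigid := (hc.inter_eq_of_cycS_subset (a := y - 1) (by omega) (by omega) hh hy1h
          (by rwa [show y - 1 + 1 = y by omega])).2
        rw [show y - 1 + 2 = y + 1 by omega, show y - 1 + 1 = y by omega] at hrigid
        have hz : z ∈ h ∩ c (y + 1) := mem_inter.2 ⟨hlast (mem_inter.2 ⟨hzy, hz1⟩), hzy⟩
        rw [hrigid] at hz
        exact ih (by omega) (cycS_subset_left hz)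
    obtain ⟨m, c', hm, hc'⟩ := hpre.exists_isSimpleCycle
    have := hc.2.1 m c' hc'
    omega

lemma IsExtremalCycle.notMem_of_notMem_last (hc : IsExtremalCycle E ℓ c) {z : N}
    (hz1 : z ∈ c 1) (hzℓ : z ∉ c ℓ) {y : ℕ} (hy : 3 ≤ y) (hyℓ : y ≤ ℓ) : z ∉ c y := by
  have hℓ := hc.1.1
  have := hc.revCycle.notMem_of_notMem_two (y := ℓ + 2 - y) (by rwa [BPO.revCycle, if_pos rfl])
    (by rwa [BPO.revCycle, if_neg (by omega), show ℓ + 2 - 2 = ℓ by omega]) (by omega) (by omega)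
  rwa [BPO.revCycle, if_neg (by omega), show ℓ + 2 - (ℓ + 2 - y) = y by omega] at this

lemma IsSimpleCycle.isLocallySimple_shortcut (hc : IsSimpleCycle E ℓ c) {j : ℕ} {g : Finset N}
    (hj : 2 ≤ j) (hjℓ : j + 2 ≤ ℓ) (hg : g ∈ E) (hjg : cycS c ℓ (j + 1) ⊆ g)
    (hlast : ∀ h ∈ E, ¬ cycS c ℓ j ∪ (c (j + 1) ∩ g) ∪ (g ∩ c 2) ⊆ h) :
    IsLocallySimple E (j + 1) (Function.update (fun t => c (t + 1)) (j + 1) g) := by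
  set F := Function.update (fun t => c (t + 1)) (j + 1) g
  have hF : ∀ t, t ≠ j + 1 → F t = c (t + 1) := fun t ht => Function.update_of_ne ht ..
  have hFj : F (j + 1) = g := Function.update_self ..
  refine hc.isLocallySimple.of_cycS_subset (d := 1) (by omega) (fun t ht htm => ?_)
    (by omega) (fun t ht htm => ?_) ?_
  · rcases eq_or_ne t (j + 1) with rfl | htj
    · rwa [hFj]
    · rw [hF t htj]
      exact hc.2.1 _ (by omega) (by omega)
  · rw [cycS_of_ne (c := F) (by omega), hF t (by omega)]
    rcases eq_or_ne t j with rfl | htj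
    · rw [hFj]
      exact subset_inter cycS_subset_left hjg
    · rw [hF (t + 1) (by omega), cycS_of_ne (by omega)]
  · rintro ⟨h, hh, hcov⟩
    rw [show j + 1 - 2 = j - 1 by omega, show j + 1 - 1 = j by omega, cycS_self,
      cycS_of_ne (by omega), cycS_of_ne (by omega), show j - 1 + 1 = j by omega, hFj,
      hF 1 (by omega), hF j (by omega), hF (j - 1) (by omega), show j - 1 + 1 = j by omega,
      ← cycS_of_ne (show j ≠ ℓ by omega)] at hcov
    exact hlast h hh hcov

/-- If the sequence `e_2, …, e_{j+1}, g` had no edge through its last three corners, it would be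
a shorter locally simple sequence; the edge through them is a new `g` one step further back. -/
lemma IsExtremalCycle.inter_last_two_not_subset (hc : IsExtremalCycle E ℓ c) {w : N}
    (hw2 : w ∈ c 2) (hw3 : w ∉ c 3) {j : ℕ} (hj : 2 ≤ j) (hjℓ : j + 2 ≤ ℓ) {g : Finset N}
    (hg : g ∈ E) (hwg : w ∈ g) (hjg : cycS c ℓ j ⊆ g) (hj1g : cycS c ℓ (j + 1) ⊆ g) :
    ¬ c ℓ ∩ c 2 ⊆ g := by
  induction j, hj using Nat.le_induction generalizing g with
  | base =>
    intro _
    have hrigid := (hc.inter_eq_of_cycS_subset (a := 2) (by norm_num) hjℓ hg hjg hj1g).1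
    exact hw3 (cycS_subset_right (by omega) (hrigid ▸ mem_inter.2 ⟨hw2, hwg⟩))
  | succ j hj ih =>
    intro h2g
    have hshort := hc.1.isLocallySimple_shortcut hj (by omega) hg hjg fun h hh hcov => by
      rw [union_subset_iff, union_subset_iff] at hcov
      obtain ⟨⟨hjh, hj1h⟩, hlast⟩ := hcov
      exact ih (by omega) hh (hlast (mem_inter.2 ⟨hwg, hw2⟩)) hjh
        (subset_trans (subset_inter cycS_subset_left hjg) hj1h)
        (subset_trans (subset_inter h2g inter_subset_right) hlast)
    obtain ⟨m, c', hm, hc'⟩ := hshort.exists_isSimpleCycle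
    have := hc.2.1 m c' hc'
    omega

end Extremal

section Contraction

variable {E : Finset (Finset N)} {ℓ : ℕ} {c : ℕ → Finset N} {u w : N} {e : Finset N}

lemma mem_contrE_of_notMem (he : e ∈ E) (hw : w ∉ e) : e ∈ contrE E u w :=
  mem_union_left _ (mem_filter.2 ⟨he, hw⟩)

lemma erase_union_mem_contrE (he : e ∈ E) (hw : w ∈ e) (hne : e ≠ {u, w}) :
    e.erase w ∪ {u} ∈ contrE E u w :=
  mem_union_right _ (mem_image.2 ⟨e, mem_filter.2 ⟨he, hw, hne⟩, rfl⟩)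

lemma exists_erase_subset_of_mem_contrE (h : e ∈ contrE E u w) :
    ∃ g ∈ E, e.erase u ⊆ g ∧ (u ∈ e → u ∈ g ∨ w ∈ g) := by
  simp only [contrE, mem_union, mem_filter, mem_image] at h
  rcases h with ⟨he, -⟩ | ⟨g, ⟨hg, hwg, -⟩, rfl⟩
  · exact ⟨e, he, erase_subset _ _, Or.inl⟩
  · refine ⟨g, hg, fun x hx => ?_, fun _ => Or.inr hwg⟩
    simp only [mem_erase, mem_union, mem_singleton] at hx
    tauto

/-- The image of `e_2, …, e_ℓ` under contracting `w` to `u`, when `e_2` is the only one of them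
containing `w`. -/
def contractCycle (c : ℕ → Finset N) (u w : N) : ℕ → Finset N :=
  Function.update (fun t => c (t + 1)) 1 ((c 2).erase w ∪ {u})

lemma contractCycle_one : contractCycle c u w 1 = (c 2).erase w ∪ {u} :=
  Function.update_self ..

lemma contractCycle_of_ne_one {t : ℕ} (ht : t ≠ 1) : contractCycle c u w t = c (t + 1) :=
  Function.update_of_ne ht ..

lemma cycS_contractCycle (hu3 : u ∉ c 3) (hw3 : w ∉ c 3) {t : ℕ} (ht : 1 ≤ t)
    (htℓ : t + 2 ≤ ℓ) : cycS (contractCycle c u w) (ℓ - 1) t = cycS c ℓ (t + 1) := by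
  rw [cycS_of_ne (by omega), cycS_of_ne (by omega), contractCycle_of_ne_one (t := t + 1) (by omega)]
  rcases eq_or_ne t 1 with rfl | ht1
  · rw [contractCycle_one]
    ext x
    simp only [mem_inter, mem_union, mem_erase, mem_singleton, Nat.reduceAdd]
    constructor
    · rintro ⟨⟨-, hx⟩ | rfl, hx3⟩
      exacts [⟨hx, hx3⟩, absurd hx3 hu3]
    · rintro ⟨hx, hx3⟩
      exact ⟨.inl ⟨fun h => hw3 (h ▸ hx3), hx⟩, hx3⟩
  · rw [contractCycle_of_ne_one ht1]

lemma cycS_contractCycle_self (hℓ : 3 ≤ ℓ) :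
    cycS (contractCycle c u w) (ℓ - 1) (ℓ - 1) = c ℓ ∩ ((c 2).erase w ∪ {u}) := by
  rw [cycS_self, contractCycle_one, contractCycle_of_ne_one (by omega),
    show ℓ - 1 + 1 = ℓ by omega]

/-- An edge of the contraction through the last three corners comes from an edge `g` through
`s_{ℓ-2}`, `s_{ℓ-1}` and `e_ℓ ∩ e_2` that contains `u` or `w`; rigidity rules out `u ∈ g`. -/
lemma IsExtremalCycle.not_tripleCovered_contractCycle_last (hc : IsExtremalCycle E ℓ c)
    (huℓ : u ∈ c ℓ) (hu1 : u ∈ c 1) (hu2 : u ∉ c 2) (hw1 : w ∈ c 1) (hw2 : w ∈ c 2)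
    (hwℓ : w ∉ c ℓ) {t : ℕ} (ht : 1 ≤ t) (htℓ : t + 3 = ℓ) :
    ¬ TripleCovered (contrE E u w) (ℓ - 1) (contractCycle c u w) t (t + 1) (t + 2) := by
  rintro ⟨e', he', hcov⟩
  have hu_mid : ∀ y, 2 ≤ y → y < ℓ → u ∉ c y := fun y => hc.notMem_of_notMem_two hu1 hu2
  have hw3 : w ∉ c 3 := hc.notMem_of_notMem_last hw1 hwℓ le_rfl (by omega)
  have hu3 : u ∉ c 3 := hu_mid 3 (by norm_num) (by omega)
  have hlast : cycS (contractCycle c u w) (ℓ - 1) (t + 2) = c ℓ ∩ ((c 2).erase w ∪ {u}) := by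
    rw [show t + 2 = ℓ - 1 by omega, cycS_contractCycle_self (by omega)]
  rw [cycS_contractCycle hu3 hw3 ht (by omega), cycS_contractCycle hu3 hw3 (by omega) (by omega),
    hlast, union_subset_iff, union_subset_iff] at hcov
  obtain ⟨⟨h1, h2⟩, h3⟩ := hcov
  obtain ⟨g, hg, hsub, hug⟩ := exists_erase_subset_of_mem_contrE he'
  have hg1 : cycS c ℓ (t + 1) ⊆ g := subset_trans (subset_erase.2
    ⟨h1, fun hu => hu_mid (t + 1) (by omega) (by omega) (cycS_subset_left hu)⟩) hsub
  have hg2 : cycS c ℓ (t + 1 + 1) ⊆ g := subset_trans (subset_erase.2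
    ⟨h2, fun hu => hu_mid (t + 2) (by omega) (by omega) (cycS_subset_left hu)⟩) hsub
  rcases hug (h3 (mem_inter.2 ⟨huℓ, mem_union_right _ (mem_singleton_self u)⟩)) with hug | hwg
  · have hrigid := (hc.inter_eq_of_cycS_subset (by omega) (by omega) hg hg1 hg2).2
    rw [show t + 1 + 2 = ℓ by omega] at hrigid
    exact hu_mid (t + 2) (by omega) (by omega)
      (cycS_subset_left (hrigid ▸ mem_inter.2 ⟨hug, huℓ⟩))
  · refine hc.inter_last_two_not_subset hw2 hw3 (by omega) (by omega) hg hwg hg1 hg2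
      (subset_trans ?_ hsub)
    refine subset_erase.2 ⟨fun x hx => h3 ?_, fun hu => hu2 (mem_inter.1 hu).2⟩
    rw [mem_inter] at hx ⊢
    exact ⟨hx.1, mem_union_left _ (mem_erase.2 ⟨fun h => hwℓ (h ▸ hx.1), hx.2⟩)⟩

lemma IsExtremalCycle.isLocallySimple_contractCycle (hc : IsExtremalCycle E ℓ c) (hℓ : 4 ≤ ℓ)
    (huℓ : u ∈ c ℓ) (hu1 : u ∈ c 1) (hu2 : u ∉ c 2) (hw1 : w ∈ c 1) (hw2 : w ∈ c 2)
    (hwℓ : w ∉ c ℓ) : IsLocallySimple (contrE E u w) (ℓ - 1) (contractCycle c u w) := by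
  have hu_mid : ∀ y, 2 ≤ y → y < ℓ → u ∉ c y := fun y => hc.notMem_of_notMem_two hu1 hu2
  have hw_mid : ∀ y, 3 ≤ y → y ≤ ℓ → w ∉ c y := fun y => hc.notMem_of_notMem_last hw1 hwℓ
  have hcorner : ∀ t, 1 ≤ t → t + 2 ≤ ℓ → cycS (contractCycle c u w) (ℓ - 1) t = cycS c ℓ (t + 1) :=
    fun t => cycS_contractCycle (hu_mid 3 (by norm_num) (by omega)) (hw_mid 3 le_rfl (by omega))
  refine ⟨by omega, fun t ht htℓ => ?_, fun t ht htℓ hcov => ?_⟩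
  · rcases eq_or_ne t 1 with rfl | ht1
    · rw [contractCycle_one]
      exact erase_union_mem_contrE (hc.1.2.1 2 (by omega) (by omega)) hw2
        (fun h => hu2 (h ▸ mem_insert_self u {w}))
    · rw [contractCycle_of_ne_one ht1]
      exact mem_contrE_of_notMem (hc.1.2.1 _ (by omega) (by omega)) (hw_mid _ (by omega) (by omega))
  by_cases ht' : t + 4 ≤ ℓ
  · obtain ⟨e', he', hcov⟩ := hcov
    obtain ⟨g, hg, hsub, -⟩ := exists_erase_subset_of_mem_contrE he'
    rw [hcorner t ht (by omega), hcorner (t + 1) (by omega) (by omega),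
      hcorner (t + 2) (by omega) (by omega)] at hcov
    refine (isSimpleCycle_iff.1 hc.1).2.2 (t + 1) (t + 1 + 1) (t + 2 + 1) (by omega) (by omega)
      (by omega) (by omega) ⟨g, hg, subset_trans (subset_erase.2 ⟨hcov, ?_⟩) hsub⟩
    simp only [mem_union, not_or]
    exact ⟨⟨fun hu => hu_mid (t + 1) (by omega) (by omega) (cycS_subset_left hu),
      fun hu => hu_mid (t + 2) (by omega) (by omega) (cycS_subset_left hu)⟩,
      fun hu => hu_mid (t + 3) (by omega) (by omega) (cycS_subset_left hu)⟩
  · exact hc.not_tripleCovered_contractCycle_last huℓ hu1 hu2 hw1 hw2 hwℓ ht (by omega) hcov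

end Contraction

theorem stmt15_general {N : Type*} [DecidableEq N]
    (V : Finset N) (E : Finset (Finset N))
    (hVsub : ∀ e ∈ E, e ⊆ V)
    (ℓ : ℕ) (hex : ∃ c, IsSimpleCycle E ℓ c)
    (hmin : ∀ ℓ' c, IsSimpleCycle E ℓ' c → ℓ ≤ ℓ')
    (hl : 4 ≤ ℓ) :
    ∃ G' : Finset N × Finset (Finset N),
      Relation.ReflTransGen Step (V, E) G' ∧
        ∃ ℓ' c', ℓ' ≤ ℓ - 1 ∧ IsSimpleCycle G'.2 ℓ' c' := by
  obtain ⟨c, hc⟩ := exists_isExtremalCycle hex hmin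
  obtain ⟨u, huℓ, hu1, hu2⟩ := hc.exists_mem_last_notMem_two hl
  obtain ⟨w, hw1, hw2, hwℓ⟩ := hc.exists_mem_two_notMem_last hl
  obtain ⟨m, c', hm, hc'⟩ :=
    (hc.isLocallySimple_contractCycle hl huℓ hu1 hu2 hw1 hw2 hwℓ).exists_isSimpleCycle
  have hc1 : c 1 ∈ E := hc.1.2.1 1 le_rfl (by omega)
  have huw : u ≠ w := fun h => hu2 (h ▸ hw2)
  exact ⟨_, .single (.contract V E u w (hVsub _ hc1 hu1) (hVsub _ hc1 hw1) huw
    ⟨c 1, hc1, hu1, hw1⟩), m, c', hm, hc'⟩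

theorem stmt15 {N : Type*} [DecidableEq N] [Infinite N]
    (V : Finset N) (E : Finset (Finset N))
    (hcard : ∀ e ∈ E, 2 ≤ e.card) (hVsub : ∀ e ∈ E, e ⊆ V)
    (hcover : ∀ v ∈ V, ∃ e ∈ E, v ∈ e)
    (ℓ : ℕ) (hex : ∃ c, IsSimpleCycle E ℓ c)
    (hmin : ∀ ℓ' c, IsSimpleCycle E ℓ' c → ℓ ≤ ℓ')
    (hl : 4 ≤ ℓ) :
    ∃ G' : Finset N × Finset (Finset N),
      Relation.ReflTransGen Step (V, E) G' ∧
        ∃ ℓ' c', ℓ' ≤ ℓ - 1 ∧ IsSimpleCycle G'.2 ℓ' c' :=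
  stmt15_general V E hVsub ℓ hex hmin hl

end BPO
end

section
/- Let G = (V,E) be a hypergraph with n := |V| ≥ 3 such that the set of maximal edges of G consists exactly of all subsets of V of cardinality n − 1. Then CER(G) is not an extension of MP(G). -/
/-!
Let `n = |V|` and `t = 1 / (n - 1)`. The point `z` with `z_p = 1 - t |p|` on every coordinate of
`ℝ^{V ∪ cl(E)}` lies in `CER(G)`: `ψ(U, e)(z)` is an alternating sum over `W ⊆ U` of a
function affine in `|W|`, so it equals `1 - t |e| = 0` for `U = ∅`, `t` for `|U| = 1` and `0`
otherwise. On the other hand, at a binary point of `S(G)` with support `T` the sum of `z_e`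
over the `(n - 1)`-subsets `e` of `V` minus the sum of `z_v` over the nodes is
`C(|T|, n - 1) - |T| ≥ 2 - n`, so this valid inequality holds on `MP(G)`. The projection of `z`
gives `-n t (n - 2) < 2 - n`.
-/

open Finset

namespace BPO

variable {N : Type*} [DecidableEq N]

variable {V : Finset N} {E F : Finset (Finset N)}

theorem sum_powerset_neg_one_pow_card_cast {R : Type*} [CommRing R] (U : Finset N) :
    ∑ W ∈ U.powerset, (-1 : R) ^ #W = if U = ∅ then 1 else 0 := by
  have h := congrArg (Int.cast : ℤ → R) (sum_powerset_neg_one_pow_card (x := U))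
  push_cast at h
  simpa [apply_ite (Int.cast : ℤ → R)] using h

theorem sum_powerset_neg_one_pow_card_mul_card {R : Type*} [CommRing R] (U : Finset N) :
    ∑ W ∈ U.powerset, (-1 : R) ^ #W * #W = if #U = 1 then -1 else 0 := by
  rcases U.eq_empty_or_nonempty with rfl | ⟨a, ha⟩
  · simp
  rw [← insert_erase ha, sum_powerset_insert (notMem_erase a U), ← sum_add_distrib]
  have hpair : ∀ W ∈ (U.erase a).powerset,
      (-1 : R) ^ #W * #W + (-1 : R) ^ #(insert a W) * #(insert a W) = -(-1 : R) ^ #W := by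
    intro W hW
    rw [card_insert_of_notMem fun haW => notMem_erase a U (mem_powerset.mp hW haW)]
    push_cast
    ring
  rw [sum_congr rfl hpair, sum_neg_distrib, sum_powerset_neg_one_pow_card_cast,
    card_insert_of_notMem (notMem_erase a U)]
  simp only [← card_eq_zero, Nat.add_eq_right]
  split_ifs <;> simp

theorem psi_eq_of_ev_eq_sub_mul_card {z : Pt V F} {U e : Finset N} {a b : ℝ} (hU : U ⊆ e)
    (hz : ∀ q ⊆ e, ev z q = a - b * #q) :
    psi z U e = (if U = ∅ then a - b * #e else 0) + (if #U = 1 then b else 0) := by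
  have hterm : ∀ W ∈ U.powerset, (if Even #W then (1 : ℝ) else -1) * ev z ((e \ U) ∪ W)
      = (a - b * #(e \ U)) * (-1 : ℝ) ^ #W - b * ((-1 : ℝ) ^ #W * #W) := by
    intro W hW
    have hWU := mem_powerset.mp hW
    rw [hz _ (union_subset sdiff_subset (hWU.trans hU)),
      card_union_of_disjoint (sdiff_disjoint.mono_right hWU), ← neg_one_pow_eq_ite]
    push_cast
    ring
  rw [psi, sum_congr rfl hterm, sum_sub_distrib, ← mul_sum, ← mul_sum,
    sum_powerset_neg_one_pow_card_cast, sum_powerset_neg_one_pow_card_mul_card]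
  split_ifs with h0 <;> simp_all

theorem ev_of_mem_coords (z : Pt V F) {p : Finset N} (hp : p ∈ coords V F) :
    ev z p = z ⟨p, hp⟩ :=
  dif_pos hp

def cardPoint (V : Finset N) (F : Finset (Finset N)) (t : ℝ) : Pt V F :=
  fun p => 1 - t * #p.1

theorem ev_cardPoint {t : ℝ} {q : Finset N} (hq : q ∈ coords V F ∨ q = ∅) :
    ev (cardPoint V F t) q = 1 - t * #q := by
  unfold ev
  split_ifs with h
  · rfl
  · simp_all
  · exact absurd hq (by simp_all)

theorem mem_coords_clE {e q : Finset N} (he : e ∈ E) (heV : e ⊆ V) (hqe : q ⊆ e)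
    (hq : q.Nonempty) : q ∈ coords V (clE E) := by
  rcases Nat.lt_or_ge #q 2 with h | h
  · obtain ⟨v, rfl⟩ := (card_eq_one (s := q)).mp (by have := hq.card_pos; omega)
    exact mem_union_right _ (mem_image_of_mem _ (heV (hqe (mem_singleton_self v))))
  · exact mem_union_left _
      (mem_filter.mpr ⟨mem_biUnion.mpr ⟨e, he, mem_powerset.mpr hqe⟩, h⟩)

theorem coords_subset_coords_clE (hE : ∀ e ∈ E, 2 ≤ #e) : coords V E ⊆ coords V (clE E) :=
  union_subset_union
    (fun e he => mem_filter.mpr ⟨mem_biUnion.mpr ⟨e, he, mem_powerset_self e⟩, hE e he⟩)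
    subset_rfl

theorem cardPoint_mem_CER {t : ℝ} (ht : 0 ≤ t)
    (hE : ∀ e ∈ maxEdges E, e ⊆ V ∧ t * #e ≤ 1) :
    cardPoint V (clE E) t ∈ CER V E := by
  intro e he U hU
  have heE : e ∈ E := (mem_filter.mp he).1
  have hev : ∀ q ⊆ e, ev (cardPoint V (clE E) t) q = 1 - t * #q := fun q hq =>
    ev_cardPoint (q.eq_empty_or_nonempty.symm.imp (mem_coords_clE heE (hE e he).1 hq) id)
  rw [psi_eq_of_ev_eq_sub_mul_card hU hev]
  have := (hE e he).2
  split_ifs <;> linarith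

theorem res_cardPoint (t : ℝ) (hE : ∀ e ∈ E, 2 ≤ #e) :
    res V E (cardPoint V (clE E) t) = cardPoint V E t :=
  funext fun p => ev_cardPoint (Or.inl (coords_subset_coords_clE hE p.2))

theorem le_choose_pred_add_sub_two {k n : ℕ} (hk : k ≤ n) :
    k ≤ k.choose (n - 1) + (n - 2) := by
  rcases (show k ≤ n - 2 ∨ k + 1 = n ∨ k = n by omega) with h | h | rfl
  · omega
  · rw [← h, Nat.add_sub_cancel, Nat.choose_self]
    omega
  · rcases k with _ | k
    · simp
    · rw [Nat.add_sub_cancel, Nat.choose_succ_self_right]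
      omega

theorem filter_powersetCard_subset {s T : Finset N} (hT : T ⊆ s) (k : ℕ) :
    (s.powersetCard k).filter (· ⊆ T) = T.powersetCard k := by
  ext e
  simp only [mem_filter, mem_powersetCard]
  exact ⟨fun ⟨⟨_, hk⟩, heT⟩ => ⟨heT, hk⟩,
    fun ⟨heT, hk⟩ => ⟨⟨heT.trans hT, hk⟩, heT⟩⟩

noncomputable def evAffine (V : Finset N) (E : Finset (Finset N)) (p : Finset N) :
    Pt V E →ᵃ[ℝ] ℝ :=
  if h : p ∈ coords V E then
    (LinearMap.proj (R := ℝ) (φ := fun _ => ℝ) ⟨p, h⟩).toAffineMap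
  else AffineMap.const ℝ (Pt V E) (if p = ∅ then 1 else 0)

@[simp]
theorem evAffine_apply (p : Finset N) (z : Pt V E) : evAffine V E p z = ev z p := by
  unfold evAffine ev
  split_ifs <;> rfl

theorem _root_.AffineMap.finset_sum_apply {k ι V₁ P V₂ : Type*} [Ring k] [AddCommGroup V₁]
    [Module k V₁] [AddTorsor V₁ P] [AddCommGroup V₂] [Module k V₂] (s : Finset ι)
    (f : ι → P →ᵃ[k] V₂) (x : P) : (∑ i ∈ s, f i) x = ∑ i ∈ s, f i x :=
  map_sum (⟨⟨fun g => g x, rfl⟩, fun _ _ => rfl⟩ : (P →ᵃ[k] V₂) →+ V₂) f s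

noncomputable def facetNodeForm (V : Finset N) (E : Finset (Finset N)) : Pt V E →ᵃ[ℝ] ℝ :=
  ∑ e ∈ V.powersetCard (#V - 1), evAffine V E e - ∑ v ∈ V, evAffine V E {v}

theorem facetNodeForm_apply (z : Pt V E) :
    facetNodeForm V E z = ∑ e ∈ V.powersetCard (#V - 1), ev z e - ∑ v ∈ V, ev z {v} := by
  simp [facetNodeForm, AffineMap.finset_sum_apply]

theorem ev_singleton_of_mem_mlSet {w : Pt V E} (hw : w ∈ mlSet V E) {v : N} (hv : v ∈ V) :
    ev w {v} = if ev w {v} = 1 then 1 else 0 := by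
  have hvc : {v} ∈ coords V E := mem_union_right _ (mem_image_of_mem _ hv)
  rw [ev_of_mem_coords w hvc]
  rcases hw.1 ⟨{v}, hvc⟩ with h | h <;> simp [h]

theorem ev_of_mem_mlSet {w : Pt V E} (hw : w ∈ mlSet V E) {e : Finset N} (he : e ∈ E)
    (heV : e ⊆ V) : ev w e = if e ⊆ V.filter (fun v => ev w {v} = 1) then 1 else 0 := by
  rw [hw.2 e he, prod_congr rfl fun v hv => ev_singleton_of_mem_mlSet hw (heV hv), prod_boole]
  congr 1
  exact propext ⟨fun h v hv => mem_filter.mpr ⟨heV hv, h v hv⟩,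
    fun h v hv => (mem_filter.mp (h hv)).2⟩

theorem two_sub_card_le_facetNodeForm_of_mem_mlSet (hV : 2 ≤ #V)
    (hE : V.powersetCard (#V - 1) ⊆ E) {w : Pt V E} (hw : w ∈ mlSet V E) :
    2 - (#V : ℝ) ≤ facetNodeForm V E w := by
  set T := V.filter fun v => ev w {v} = 1
  have hT : T ⊆ V := filter_subset _ _
  have hfacets : ∑ e ∈ V.powersetCard (#V - 1), ev w e = ((#T).choose (#V - 1) : ℝ) := by
    rw [sum_congr rfl fun e he => ev_of_mem_mlSet hw (hE he) (mem_powersetCard.mp he).1,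
      sum_boole, filter_powersetCard_subset hT, card_powersetCard]
  have hnodes : ∑ v ∈ V, ev w {v} = (#T : ℝ) := by
    rw [sum_congr rfl fun v hv => ev_singleton_of_mem_mlSet hw hv, sum_boole]
  have hcomb : (#T : ℝ) ≤ (#T).choose (#V - 1) + ((#V - 2 : ℕ) : ℝ) := by
    exact_mod_cast le_choose_pred_add_sub_two (card_le_card hT)
  rw [facetNodeForm_apply, hfacets, hnodes]
  push_cast [hV] at hcomb
  linarith

theorem two_sub_card_le_facetNodeForm_of_mem_MP (hV : 2 ≤ #V)
    (hE : V.powersetCard (#V - 1) ⊆ E) {w : Pt V E} (hw : w ∈ MP V E) :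
    2 - (#V : ℝ) ≤ facetNodeForm V E w :=
  convexHull_min (fun _ hw' => two_sub_card_le_facetNodeForm_of_mem_mlSet hV hE hw')
    ((convex_Ici _).affine_preimage (facetNodeForm V E)) hw

theorem facetNodeForm_cardPoint (hV : V.Nonempty) (hE : V.powersetCard (#V - 1) ⊆ E) (t : ℝ) :
    facetNodeForm V E (cardPoint V E t) = -#V * t * (#V - 2) := by
  have hV1 : 1 ≤ #V := hV.card_pos
  have hfacets : ∀ e ∈ V.powersetCard (#V - 1), ev (cardPoint V E t) e = 1 - t * (#V - 1) := by
    intro e he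
    rw [ev_cardPoint (Or.inl (mem_union_left _ (hE he))), (mem_powersetCard.mp he).2]
    push_cast [hV1]
    ring
  have hnodes : ∀ v ∈ V, ev (cardPoint V E t) {v} = 1 - t := by
    intro v hv
    rw [ev_cardPoint (Or.inl (mem_union_right _ (mem_image_of_mem _ hv))), card_singleton]
    ring
  rw [facetNodeForm_apply, sum_congr rfl hfacets, sum_congr rfl hnodes, sum_const, sum_const,
    card_powersetCard, ← Nat.choose_symm (Nat.sub_le _ _), Nat.sub_sub_self hV1,
    Nat.choose_one_right]
  simp only [nsmul_eq_mul]
  ring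

theorem stmt16_general {N : Type*} [DecidableEq N] (V : Finset N) (E : Finset (Finset N))
    (hcard : ∀ e ∈ E, 2 ≤ e.card) (hVsub : ∀ e ∈ E, e ⊆ V)
    (hn : 3 ≤ V.card)
    (hmax : maxEdges E = V.powerset.filter fun e => e.card = V.card - 1) :
    ¬ IsExtension V E := by
  intro hext
  have hfacets : maxEdges E = V.powersetCard (#V - 1) := hmax.trans powersetCard_eq_filter.symm
  have hfacetsE : V.powersetCard (#V - 1) ⊆ E := hfacets ▸ filter_subset _ _
  have hn' : (3 : ℝ) ≤ #V := by exact_mod_cast hn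
  set t : ℝ := 1 / (#V - 1)
  have ht : 0 < t := one_div_pos.mpr (by linarith)
  have htn : t * (#V - 1) = 1 := div_mul_cancel₀ 1 (by linarith)
  have hz : cardPoint V (clE E) t ∈ CER V E := by
    refine cardPoint_mem_CER ht.le fun e he => ⟨hVsub e (mem_filter.mp he).1, ?_⟩
    rw [hfacets, mem_powersetCard] at he
    rw [he.2, Nat.cast_sub (by omega), Nat.cast_one, htn]
  have hMP : cardPoint V E t ∈ MP V E := by
    rw [hext, ← res_cardPoint t hcard]
    exact ⟨_, hz, rfl⟩
  have hvalid := two_sub_card_le_facetNodeForm_of_mem_MP (by omega) hfacetsE hMP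
  rw [facetNodeForm_cardPoint (card_pos.mp (by omega)) hfacetsE] at hvalid
  -- with `n t = 1 + t` the inequality reads `2 - n ≤ -(1 + t) (n - 2)`, i.e. `t (n - 2) ≤ 0`
  nlinarith [mul_pos ht (show (0 : ℝ) < #V - 2 by linarith)]

theorem stmt16 {N : Type*} [DecidableEq N] (V : Finset N) (E : Finset (Finset N))
    (hcard : ∀ e ∈ E, 2 ≤ e.card) (hVsub : ∀ e ∈ E, e ⊆ V)
    (hcover : ∀ v ∈ V, ∃ e ∈ E, v ∈ e)
    (hn : 3 ≤ V.card)
    (hmax : maxEdges E = V.powerset.filter fun e => e.card = V.card - 1) :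
    ¬ IsExtension V E :=
  stmt16_general V E hcard hVsub hn hmax

end BPO
end

section
/- Let G = (V,E) be a hypergraph with G = cl(G), and let C = e_1, e_2, e_3, e_1 be an α-cycle of G satisfying e_1 \ (e_2 ∪ e_3) = ∅, e_2 \ (e_1 ∪ e_3) = ∅, and e_3 \ (e_1 ∪ e_2) = ∅. Then the following generalized triangle inequalities are valid for MP(G): z_{e_1} + z_{e_2} ≤ z_{e_1∩e_2} + z_{e_3}; z_{e_1} + z_{e_3} ≤ z_{e_1∩e_3} + z_{e_2}; z_{e_2} + z_{e_3} ≤ z_{e_2∩e_3} + z_{e_1}; and z_{e_1∩e_2} + z_{e_1∩e_3} + z_{e_2∩e_3} − z_{e_1} − z_{e_2} − z_{e_3} ≤ z_{e_1∩e_2∩e_3}. -/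
open Finset

namespace BPO

variable {N : Type*} [DecidableEq N]

-- Auxiliary lemmas

lemma prod01 {x : N → ℝ} (hx : ∀ v, x v = 0 ∨ x v = 1) (s : Finset N) :
    (∏ v ∈ s, x v) = 0 ∨ (∏ v ∈ s, x v) = 1 := by
  induction s using Finset.induction_on with
  | empty => right; simp
  | @insert a s ha ih =>
    rw [Finset.prod_insert ha]
    rcases hx a with h | h <;> rcases ih with i | i <;> simp [h, i]

lemma all_one {x : N → ℝ} (hx : ∀ v, x v = 0 ∨ x v = 1) {s : Finset N}
    (h : (∏ v ∈ s, x v) = 1) : ∀ v ∈ s, x v = 1 := by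
  intro v hv
  rcases hx v with h0 | h1
  · have : (∏ v ∈ s, x v) = 0 := Finset.prod_eq_zero hv h0
    rw [this] at h; norm_num at h
  · exact h1

lemma prod_one_of_subset {x : N → ℝ} (hx : ∀ v, x v = 0 ∨ x v = 1)
    {s t : Finset N} (hst : s ⊆ t) (h : (∏ v ∈ t, x v) = 1) :
    (∏ v ∈ s, x v) = 1 :=
  Finset.prod_eq_one fun v hv => all_one hx h v (hst hv)

lemma tri01 (a b c p : ℝ) (ha : a = 0 ∨ a = 1) (hb : b = 0 ∨ b = 1)
    (hc : c = 0 ∨ c = 1) (hp : p = 0 ∨ p = 1)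
    (hap : a = 1 → p = 1) (hbp : b = 1 → p = 1)
    (habc : a = 1 → b = 1 → c = 1) : a + b ≤ p + c := by
  have hc0 : 0 ≤ c := by rcases hc with rfl | rfl <;> norm_num
  have hp0 : 0 ≤ p := by rcases hp with rfl | rfl <;> norm_num
  rcases ha with rfl | rfl <;> rcases hb with rfl | rfl <;> simp_all <;> linarith

lemma quad01 (a b c p12 p13 p23 p123 : ℝ)
    (ha : a = 0 ∨ a = 1) (hb : b = 0 ∨ b = 1) (hc : c = 0 ∨ c = 1)
    (h12 : p12 = 0 ∨ p12 = 1) (h13 : p13 = 0 ∨ p13 = 1)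
    (h23 : p23 = 0 ∨ p23 = 1) (h123 : p123 = 0 ∨ p123 = 1)
    (hp1 : p12 = 1 → p123 = 1) (hp2 : p13 = 1 → p123 = 1)
    (hp3 : p23 = 1 → p123 = 1)
    (hA : p12 = 1 → p13 = 1 → a = 1) (hB : p12 = 1 → p23 = 1 → b = 1)
    (hC : p13 = 1 → p23 = 1 → c = 1) :
    p12 + p13 + p23 - a - b - c ≤ p123 := by
  have ha0 : 0 ≤ a := by rcases ha with rfl | rfl <;> norm_num
  have hb0 : 0 ≤ b := by rcases hb with rfl | rfl <;> norm_num
  have hc0 : 0 ≤ c := by rcases hc with rfl | rfl <;> norm_num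
  have h1230 : 0 ≤ p123 := by rcases h123 with rfl | rfl <;> norm_num
  rcases h12 with rfl | rfl <;> rcases h13 with rfl | rfl <;>
    rcases h23 with rfl | rfl <;> simp_all <;> linarith

lemma mem_of_cl {E : Finset (Finset N)} (hcl : clE E = E) {p e : Finset N}
    (he : e ∈ E) (hpe : p ⊆ e) (h2 : 2 ≤ p.card) : p ∈ E := by
  rw [← hcl]
  simp only [clE, Finset.mem_filter, Finset.mem_biUnion, Finset.mem_powerset]
  exact ⟨⟨e, he, hpe⟩, h2⟩

lemma empty_not_mem_coords {V : Finset N} {E : Finset (Finset N)}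
    (hcard : ∀ e ∈ E, 2 ≤ e.card) : ∅ ∉ coords V E := by
  intro h
  rcases Finset.mem_union.mp h with h1 | h2
  · have := hcard ∅ h1; simp at this
  · obtain ⟨v, -, hv⟩ := Finset.mem_image.mp h2
    exact (Finset.singleton_ne_empty v) hv

lemma ev_eq_prod {V : Finset N} {E : Finset (Finset N)}
    (hcard : ∀ e ∈ E, 2 ≤ e.card) (hcl : clE E = E) {z : Pt V E}
    (hz : z ∈ mlSet V E) {p e : Finset N} (he : e ∈ E) (hpe : p ⊆ e) :
    ev z p = ∏ v ∈ p, ev z {v} := by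
  rcases Nat.lt_or_ge p.card 2 with hlt | hge
  · interval_cases h : p.card
    · have hpempty : p = ∅ := Finset.card_eq_zero.mp h
      subst hpempty
      rw [Finset.prod_empty]
      unfold ev
      rw [dif_neg (empty_not_mem_coords hcard), if_pos rfl]
    · obtain ⟨v, rfl⟩ := Finset.card_eq_one.mp h
      rw [Finset.prod_singleton]
  · exact hz.2 p (mem_of_cl hcl he hpe hge)

lemma x01 {V : Finset N} {E : Finset (Finset N)}
    (hcard : ∀ e ∈ E, 2 ≤ e.card) {z : Pt V E} (hz : z ∈ mlSet V E) (v : N) :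
    ev z {v} = 0 ∨ ev z {v} = 1 := by
  unfold ev
  split
  · exact hz.1 _
  · rw [if_neg (Finset.singleton_ne_empty v)]; left; rfl

lemma ev_affine {V : Finset N} {E : Finset (Finset N)} (y w : Pt V E)
    (a b : ℝ) (hab : a + b = 1) (p : Finset N) :
    ev (a • y + b • w) p = a * ev y p + b * ev w p := by
  unfold ev
  split
  · simp [Pi.add_apply, Pi.smul_apply, smul_eq_mul]
  · split
    · linarith
    · ring

theorem stmt17 {N : Type*} [DecidableEq N] (V : Finset N) (E : Finset (Finset N))
    (hcard : ∀ e ∈ E, 2 ≤ e.card) (hVsub : ∀ e ∈ E, e ⊆ V)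
    (hcover : ∀ v ∈ V, ∃ e ∈ E, v ∈ e)
    (hcl : clE E = E)
    (e1 e2 e3 : Finset N) (h1 : e1 ∈ E) (h2 : e2 ∈ E) (h3 : e3 ∈ E)
    (hd12 : (e1 \ e2).Nonempty) (hd21 : (e2 \ e1).Nonempty)
    (hd13 : (e1 \ e3).Nonempty) (hd31 : (e3 \ e1).Nonempty)
    (hd23 : (e2 \ e3).Nonempty) (hd32 : (e3 \ e2).Nonempty)
    (halpha : ∀ e ∈ E, (((e1 ∩ e2) ∪ (e2 ∩ e3) ∪ (e1 ∩ e3)) \ e).Nonempty)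
    (hw1 : e1 \ (e2 ∪ e3) = ∅) (hw2 : e2 \ (e1 ∪ e3) = ∅)
    (hw3 : e3 \ (e1 ∪ e2) = ∅) :
    ∀ z ∈ MP V E,
      ev z e1 + ev z e2 ≤ ev z (e1 ∩ e2) + ev z e3 ∧
      ev z e1 + ev z e3 ≤ ev z (e1 ∩ e3) + ev z e2 ∧
      ev z e2 + ev z e3 ≤ ev z (e2 ∩ e3) + ev z e1 ∧
      ev z (e1 ∩ e2) + ev z (e1 ∩ e3) + ev z (e2 ∩ e3)
        - ev z e1 - ev z e2 - ev z e3 ≤ ev z (e1 ∩ e2 ∩ e3) := by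
  set T : Set (Pt V E) := { z | ev z e1 + ev z e2 ≤ ev z (e1 ∩ e2) + ev z e3 ∧
      ev z e1 + ev z e3 ≤ ev z (e1 ∩ e3) + ev z e2 ∧
      ev z e2 + ev z e3 ≤ ev z (e2 ∩ e3) + ev z e1 ∧
      ev z (e1 ∩ e2) + ev z (e1 ∩ e3) + ev z (e2 ∩ e3)
        - ev z e1 - ev z e2 - ev z e3 ≤ ev z (e1 ∩ e2 ∩ e3) } with hT
  have hconv : Convex ℝ T := by
    intro y hy w hw a b ha hb hab
    simp only [hT, Set.mem_setOf_eq] at hy hw ⊢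
    simp only [ev_affine y w a b hab]
    obtain ⟨hy1, hy2, hy3, hy4⟩ := hy
    obtain ⟨hw1', hw2', hw3', hw4'⟩ := hw
    refine ⟨?_, ?_, ?_, ?_⟩ <;> nlinarith [mul_le_mul_of_nonneg_left hy1 ha,
      mul_le_mul_of_nonneg_left hw1' hb, mul_le_mul_of_nonneg_left hy2 ha,
      mul_le_mul_of_nonneg_left hw2' hb, mul_le_mul_of_nonneg_left hy3 ha,
      mul_le_mul_of_nonneg_left hw3' hb, mul_le_mul_of_nonneg_left hy4 ha,
      mul_le_mul_of_nonneg_left hw4' hb]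
  have hsub : mlSet V E ⊆ T := by
    intro z hz
    have hx : ∀ v, ev z {v} = 0 ∨ ev z {v} = 1 := x01 hcard hz
    have hsub3 : e3 ⊆ e1 ∪ e2 := Finset.sdiff_eq_empty_iff_subset.mp hw3
    have hsub2 : e2 ⊆ e1 ∪ e3 := Finset.sdiff_eq_empty_iff_subset.mp hw2
    have hsub1 : e1 ⊆ e2 ∪ e3 := Finset.sdiff_eq_empty_iff_subset.mp hw1
    have he1 := ev_eq_prod hcard hcl hz h1 (Finset.Subset.refl e1)
    have he2 := ev_eq_prod hcard hcl hz h2 (Finset.Subset.refl e2)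
    have he3 := ev_eq_prod hcard hcl hz h3 (Finset.Subset.refl e3)
    have he12 := ev_eq_prod hcard hcl hz h1 (Finset.inter_subset_left (s₂ := e2))
    have he13 := ev_eq_prod hcard hcl hz h1 (Finset.inter_subset_left (s₂ := e3))
    have he23 := ev_eq_prod hcard hcl hz h2 (Finset.inter_subset_left (s₂ := e3))
    have he123 := ev_eq_prod hcard hcl hz h1
      ((Finset.inter_subset_left (s₂ := e3)).trans (Finset.inter_subset_left (s₂ := e2)))
    simp only [hT, Set.mem_setOf_eq, he1, he2, he3, he12, he13, he23, he123]
    set x : N → ℝ := fun v => ev z {v} with hxdef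
    have gtri : ∀ f g h : Finset N, h ⊆ f ∪ g →
        (∏ v ∈ f, x v) + ∏ v ∈ g, x v ≤ (∏ v ∈ f ∩ g, x v) + ∏ v ∈ h, x v := by
      intro f g h hfg
      refine tri01 _ _ _ _ (prod01 hx f) (prod01 hx g) (prod01 hx h)
        (prod01 hx (f ∩ g)) ?_ ?_ ?_
      · exact fun hh => prod_one_of_subset hx Finset.inter_subset_left hh
      · exact fun hh => prod_one_of_subset hx Finset.inter_subset_right hh
      · intro hA hB
        refine Finset.prod_eq_one fun v hv => ?_
        rcases Finset.mem_union.mp (hfg hv) with hv1 | hv2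
        · exact all_one hx hA v hv1
        · exact all_one hx hB v hv2
    refine ⟨gtri e1 e2 e3 hsub3, gtri e1 e3 e2 hsub2, gtri e2 e3 e1 hsub1, ?_⟩
    refine quad01 _ _ _ _ _ _ _ (prod01 hx e1) (prod01 hx e2) (prod01 hx e3)
      (prod01 hx _) (prod01 hx _) (prod01 hx _) (prod01 hx _) ?_ ?_ ?_ ?_ ?_ ?_
    · exact fun hh => prod_one_of_subset hx Finset.inter_subset_left hh
    · refine fun hh => prod_one_of_subset hx (fun v hv => ?_) hh
      have h' := Finset.mem_inter.mp hv
      exact Finset.mem_inter.mpr ⟨(Finset.mem_inter.mp h'.1).1, h'.2⟩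
    · refine fun hh => prod_one_of_subset hx (fun v hv => ?_) hh
      have h' := Finset.mem_inter.mp hv
      exact Finset.mem_inter.mpr ⟨(Finset.mem_inter.mp h'.1).2, h'.2⟩
    · intro hA hB
      refine Finset.prod_eq_one fun v hv => ?_
      rcases Finset.mem_union.mp (hsub1 hv) with hv2 | hv3
      · exact all_one hx hA v (Finset.mem_inter.mpr ⟨hv, hv2⟩)
      · exact all_one hx hB v (Finset.mem_inter.mpr ⟨hv, hv3⟩)
    · intro hA hB
      refine Finset.prod_eq_one fun v hv => ?_
      rcases Finset.mem_union.mp (hsub2 hv) with hv1 | hv3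
      · exact all_one hx hA v (Finset.mem_inter.mpr ⟨hv1, hv⟩)
      · exact all_one hx hB v (Finset.mem_inter.mpr ⟨hv, hv3⟩)
    · intro hA hB
      refine Finset.prod_eq_one fun v hv => ?_
      rcases Finset.mem_union.mp (hsub3 hv) with hv1 | hv2
      · exact all_one hx hA v (Finset.mem_inter.mpr ⟨hv1, hv⟩)
      · exact all_one hx hB v (Finset.mem_inter.mpr ⟨hv2, hv⟩)
  intro z hz
  exact convexHull_min hsub hconv hz

end BPO
end
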